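/- arXiv:1810.09915 — 5 statements merged into one kernel-verified Lean document; each statement's English description precedes it below -/
import Mathlib

section
/- Let ℓ ≥ 2, let n be an integer with 1 ≤ n ≤ 4, let m_0 ≥ 0, m_1,…,m_n > 0 and let λ < 0. Then there exists r ∈ R^n such that λ_i(r) = λ for every i = 1,…,n; that is, an n×ℓ+1 spiderweb central configuration with multiplier λ exists. -/
open Real BigOperators Finset

/-- The angle `θ_k = 2πk/ℓ`. -/
noncomputable def theta (ℓ k : ℕ) : ℝ := 2 * Real.pi * k / ℓ

/-- `ζ_ℓ = Σ_{k=1}^{ℓ-1} (1 - cos θ_k)^{-1/2}`. -/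
noncomputable def zeta (ℓ : ℕ) : ℝ :=
  ∑ k ∈ Finset.Ico 1 ℓ, 1 / Real.sqrt (1 - Real.cos (theta ℓ k))

/-- `R^n = {r ∈ ℝ^n : 0 < r_1 < ⋯ < r_n}`. -/
def Rn (n : ℕ) : Set (Fin n → ℝ) := {r | (∀ i, 0 < r i) ∧ StrictMono r}

/-- The multiplier `λ_i(r)` felt by the bodies on the `i`-th circle of a spiderweb
configuration with central mass `m0` and circle masses `m`. -/
noncomputable def lamCfg (ℓ n : ℕ) (m0 : ℝ) (m : Fin n → ℝ) (r : Fin n → ℝ) (i : Fin n) : ℝ :=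
  (1 / r i) * (-(m0 / (r i) ^ 2) - m i * zeta ℓ / ((2 : ℝ) ^ ((3 : ℝ) / 2) * (r i) ^ 2)
    - ∑ j ∈ Finset.univ.erase i, ∑ k ∈ Finset.range ℓ,
        m j * (r i - r j * Real.cos (theta ℓ k)) /
          ((r i) ^ 2 + (r j) ^ 2 - 2 * r i * r j * Real.cos (theta ℓ k)) ^ ((3 : ℝ) / 2))


lemma theta_mem (ℓ k : ℕ) (hℓ : 2 ≤ ℓ) (hk1 : 1 ≤ k) (hk2 : k < ℓ) :
    0 < theta ℓ k ∧ theta ℓ k < 2 * Real.pi := by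
  have hπ := Real.pi_pos
  have hℓ0 : (0:ℝ) < ℓ := by positivity
  constructor
  · have : (0:ℝ) < (k:ℝ) := by exact_mod_cast hk1
    unfold theta; positivity
  · unfold theta
    rw [div_lt_iff₀ hℓ0]
    have : (k:ℝ) < ℓ := by exact_mod_cast hk2
    nlinarith

lemma cos_theta_lt_one (ℓ k : ℕ) (hℓ : 2 ≤ ℓ) (hk1 : 1 ≤ k) (hk2 : k < ℓ) :
    Real.cos (theta ℓ k) < 1 := by
  obtain ⟨h1, h2⟩ := theta_mem ℓ k hℓ hk1 hk2
  rcases lt_or_eq_of_le (Real.cos_le_one (theta ℓ k)) with h | h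
  · exact h
  · exfalso
    have := (Real.cos_eq_one_iff_of_lt_of_lt (by linarith [Real.pi_pos] : -(2*Real.pi) < theta ℓ k) h2).1 h
    linarith

lemma zeta_pos (ℓ : ℕ) (hℓ : 2 ≤ ℓ) : 0 < zeta ℓ := by
  unfold zeta
  apply Finset.sum_pos'
  · intro k _; positivity
  · refine ⟨1, by simp [Finset.mem_Ico]; omega, ?_⟩
    have := cos_theta_lt_one ℓ 1 hℓ le_rfl (by omega)
    have h1 : 0 < 1 - Real.cos (theta ℓ 1) := by linarith
    positivity

lemma isOpen_Rn (n : ℕ) : IsOpen (Rn n) := by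
  have : Rn n = (⋂ i, {r : Fin n → ℝ | 0 < r i}) ∩ ⋂ (p : Fin n × Fin n) (_ : p.1 < p.2), {r | r p.1 < r p.2} := by
    ext r
    simp only [Set.mem_inter_iff, Set.mem_iInter, Set.mem_setOf_eq, Rn]
    constructor
    · rintro ⟨h1, h2⟩; exact ⟨h1, fun p hp => h2 hp⟩
    · rintro ⟨h1, h2⟩; exact ⟨h1, fun i j hij => h2 (i, j) hij⟩
  rw [this]
  apply IsOpen.inter
  · exact isOpen_iInter_of_finite fun i => isOpen_lt continuous_const (continuous_apply i)
  · exact isOpen_iInter_of_finite fun p => isOpen_iInter_of_finite fun _ =>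
      isOpen_lt (continuous_apply p.1) (continuous_apply p.2)


/-- squared distance kernel -/
noncomputable def qf (ℓ k : ℕ) (a b : ℝ) : ℝ := a^2 + b^2 - 2*a*b*Real.cos (theta ℓ k)

noncomputable def Ufun (ℓ n : ℕ) (m0 : ℝ) (m : Fin n → ℝ) (r : Fin n → ℝ) : ℝ :=
  (∑ i, (m0 * m i + m i^2 * zeta ℓ / (2:ℝ)^((3:ℝ)/2)) * (r i)⁻¹)
  + (1/2) * ∑ i, ∑ j ∈ Finset.univ.erase i, ∑ k ∈ Finset.range ℓ,
      m i * m j * (qf ℓ k (r i) (r j)) ^ (-(1/2) : ℝ)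

noncomputable def Ifun (n : ℕ) (m : Fin n → ℝ) (r : Fin n → ℝ) : ℝ := ∑ i, m i * (r i)^2

lemma qf_nonneg (ℓ k : ℕ) (a b : ℝ) (ha : 0 ≤ a) (hb : 0 ≤ b) : 0 ≤ qf ℓ k a b := by
  have h1 := Real.cos_le_one (theta ℓ k)
  have h2 := Real.neg_one_le_cos (theta ℓ k)
  unfold qf; nlinarith [sq_nonneg (a-b), sq_nonneg (a+b)]

lemma qf_pos (ℓ k : ℕ) (a b : ℝ) (ha : 0 < a) (hb : 0 < b) (hab : a ≠ b) : 0 < qf ℓ k a b := by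
  have h1 := Real.cos_le_one (theta ℓ k)
  have h3 : (a - b)^2 > 0 := by
    have : a - b ≠ 0 := sub_ne_zero.mpr hab
    positivity
  unfold qf; nlinarith [mul_pos ha hb]

lemma qf_zero (ℓ : ℕ) (a b : ℝ) : qf ℓ 0 a b = (a - b)^2 := by
  unfold qf theta
  simp [Real.cos_zero]
  ring

lemma sq_rpow_neg_half (d : ℝ) (hd : 0 < d) : (d^2) ^ (-(1/2):ℝ) = d⁻¹ := by
  rw [← Real.rpow_natCast d 2, ← Real.rpow_mul hd.le]
  norm_num [Real.rpow_neg_one]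

lemma single_le_triple_sum {n ℓ : ℕ} (f : Fin n → Fin n → ℕ → ℝ)
    (hf : ∀ a b k, 0 ≤ f a b k) (i j : Fin n) (k : ℕ) (hj : j ≠ i) (hk : k < ℓ) :
    f i j k ≤ ∑ a, ∑ b ∈ Finset.univ.erase a, ∑ c ∈ Finset.range ℓ, f a b c := by
  have h1 : f i j k ≤ ∑ c ∈ Finset.range ℓ, f i j c :=
    Finset.single_le_sum (fun c _ => hf i j c) (Finset.mem_range.2 hk)
  have h2 : ∑ c ∈ Finset.range ℓ, f i j c
      ≤ ∑ b ∈ Finset.univ.erase i, ∑ c ∈ Finset.range ℓ, f i b c :=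
    Finset.single_le_sum (fun b _ => Finset.sum_nonneg fun c _ => hf i b c)
      (Finset.mem_erase.2 ⟨hj, Finset.mem_univ j⟩)
  have h3 : ∑ b ∈ Finset.univ.erase i, ∑ c ∈ Finset.range ℓ, f i b c
      ≤ ∑ a, ∑ b ∈ Finset.univ.erase a, ∑ c ∈ Finset.range ℓ, f a b c :=
    Finset.single_le_sum
      (fun a _ => Finset.sum_nonneg fun b _ => Finset.sum_nonneg fun c _ => hf a b c)
      (Finset.mem_univ i)
  linarith

lemma inter_nonneg {n : ℕ} (ℓ : ℕ) (m : Fin n → ℝ) (hm : ∀ i, 0 < m i)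
    (r : Fin n → ℝ) (hr : ∀ i, 0 ≤ r i) :
    0 ≤ ∑ i, ∑ j ∈ Finset.univ.erase i, ∑ k ∈ Finset.range ℓ,
      m i * m j * (qf ℓ k (r i) (r j)) ^ (-(1/2) : ℝ) := by
  refine Finset.sum_nonneg fun i _ => Finset.sum_nonneg fun j _ => Finset.sum_nonneg fun k _ => ?_
  have := Real.rpow_nonneg (qf_nonneg ℓ k (r i) (r j) (hr i) (hr j)) (-(1/2) : ℝ)
  have := (hm i).le
  have := (hm j).le
  positivity

lemma first_nonneg {n ℓ : ℕ} (hℓ : 2 ≤ ℓ) (m0 : ℝ) (hm0 : 0 ≤ m0) (m : Fin n → ℝ)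
    (hm : ∀ i, 0 < m i) (r : Fin n → ℝ) (hr : ∀ i, 0 ≤ r i) (i : Fin n) :
    0 ≤ (m0 * m i + m i^2 * zeta ℓ / (2:ℝ)^((3:ℝ)/2)) * (r i)⁻¹ := by
  have h1 := (hm i).le
  have h2 := (zeta_pos ℓ hℓ).le
  have h3 : (0:ℝ) < (2:ℝ)^((3:ℝ)/2) := Real.rpow_pos_of_pos (by norm_num) _
  have h4 := hr i
  positivity

set_option maxHeartbeats 2000000 in
lemma exists_min (n ℓ : ℕ) (hn : 1 ≤ n) (hℓ : 2 ≤ ℓ) (m0 : ℝ) (hm0 : 0 ≤ m0)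
    (m : Fin n → ℝ) (hm : ∀ i, 0 < m i) :
    ∃ x, x ∈ Rn n ∧ Ifun n m x = 1 ∧
      ∀ r, r ∈ Rn n → Ifun n m r = 1 → Ufun ℓ n m0 m x ≤ Ufun ℓ n m0 m r := by
  haveI : NeZero n := ⟨by omega⟩
  have hζ := zeta_pos ℓ hℓ
  have h232 : (0:ℝ) < (2:ℝ)^((3:ℝ)/2) := Real.rpow_pos_of_pos (by norm_num) _
  -- reference point r₀
  set B : ℝ := ∑ i : Fin n, m i * ((i:ℝ)+1)^2 with hBdef
  have hB : 0 < B := Finset.sum_pos (fun i _ => by have := hm i; positivity) univ_nonempty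
  set s : ℝ := (Real.sqrt B)⁻¹ with hsdef
  have hs : 0 < s := by
    rw [hsdef]
    exact inv_pos.2 (Real.sqrt_pos.2 hB)
  set r₀ : Fin n → ℝ := fun i => s * ((i:ℝ)+1) with hr₀def
  have hr₀pos : ∀ i, 0 < r₀ i := by
    intro i
    have h : (0:ℝ) < (i:ℝ)+1 := by positivity
    show 0 < s * ((i:ℝ)+1)
    positivity
  have hr₀mono : StrictMono r₀ := by
    intro i j hij
    have h : (i:ℝ) < (j:ℝ) := by exact_mod_cast hij
    show s * ((i:ℝ)+1) < s * ((j:ℝ)+1)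
    nlinarith
  have hr₀Rn : r₀ ∈ Rn n := ⟨hr₀pos, hr₀mono⟩
  have hIr₀ : Ifun n m r₀ = 1 := by
    have h : Ifun n m r₀ = s^2 * B := by
      rw [hBdef, Finset.mul_sum]
      unfold Ifun
      refine Finset.sum_congr rfl fun i _ => ?_
      show m i * (s * ((i:ℝ)+1))^2 = s^2 * (m i * ((i:ℝ)+1)^2)
      ring
    rw [h, hsdef, ← Real.sqrt_inv, Real.sq_sqrt (by positivity)]
    exact inv_mul_cancel₀ (ne_of_gt hB)
  set c : ℝ := Ufun ℓ n m0 m r₀ with hcdef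
  have hc : 0 < c := by
    have h1 : 0 < ∑ i, (m0 * m i + m i^2 * zeta ℓ / (2:ℝ)^((3:ℝ)/2)) * (r₀ i)⁻¹ := by
      refine Finset.sum_pos (fun i _ => ?_) univ_nonempty
      have := hm i
      have := hr₀pos i
      positivity
    have h2 := inter_nonneg ℓ m hm r₀ (fun i => (hr₀pos i).le)
    rw [hcdef]; unfold Ufun; linarith
  -- minimal mass
  set mmin : ℝ := Finset.univ.inf' univ_nonempty m with hmmindef
  have hmminpos : 0 < mmin := by
    rw [hmmindef, Finset.lt_inf'_iff]
    exact fun i _ => hm i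
  have hmminle : ∀ i, mmin ≤ m i := fun i => Finset.inf'_le m (Finset.mem_univ i)
  -- the margin δ
  set δa : ℝ := mmin^2 * zeta ℓ / ((2:ℝ)^((3:ℝ)/2) * c) with hδadef
  set δb : ℝ := mmin^2 / (2*c) with hδbdef
  set δ : ℝ := min (min δa δb) s with hδdef
  have hδa : 0 < δa := by
    rw [hδadef]
    exact div_pos (mul_pos (pow_pos hmminpos 2) hζ) (mul_pos h232 hc)
  have hδb : 0 < δb := by
    rw [hδbdef]
    exact div_pos (pow_pos hmminpos 2) (by linarith)
  have hδ : 0 < δ := lt_min (lt_min hδa hδb) hs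
  have hδs : δ ≤ s := min_le_right _ _
  have hδδa : δ ≤ δa := le_trans (min_le_left _ _) (min_le_left _ _)
  have hδδb : δ ≤ δb := le_trans (min_le_left _ _) (min_le_right _ _)
  -- the compact box
  set K : Set (Fin n → ℝ) :=
    {r | (∀ i, δ ≤ r i) ∧ (∀ i j : Fin n, i < j → r i + δ ≤ r j) ∧ Ifun n m r = 1} with hKdef
  have hKsub : ∀ r ∈ K, r ∈ Rn n ∧ Ifun n m r = 1 := by
    rintro r ⟨h1, h2, h3⟩
    exact ⟨⟨fun i => lt_of_lt_of_le hδ (h1 i), fun i j hij => by have := h2 i j hij; linarith⟩, h3⟩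
  have hKr₀ : r₀ ∈ K := by
    refine ⟨fun i => ?_, fun i j hij => ?_, hIr₀⟩
    · have h1 : (1:ℝ) ≤ (i:ℝ)+1 := by
        have : (0:ℝ) ≤ (i:ℝ) := Nat.cast_nonneg _
        linarith
      have h2 : s * 1 ≤ s * ((i:ℝ)+1) := by nlinarith
      show δ ≤ s * ((i:ℝ)+1)
      linarith
    · have h1 : (i:ℝ)+1 ≤ (j:ℝ) := by
        have : (i:ℕ) + 1 ≤ (j:ℕ) := hij
        exact_mod_cast this
      show s * ((i:ℝ)+1) + δ ≤ s * ((j:ℝ)+1)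
      nlinarith
  have hIcont : Continuous (Ifun n m) := by
    unfold Ifun
    exact continuous_finset_sum _ fun i _ => (continuous_const.mul ((continuous_apply i).pow 2))
  have hKclosed : IsClosed K := by
    have e1 : IsClosed {r : Fin n → ℝ | ∀ i, δ ≤ r i} := by
      have : {r : Fin n → ℝ | ∀ i, δ ≤ r i} = ⋂ i, {r | δ ≤ r i} := by ext r; simp
      rw [this]
      exact isClosed_iInter fun i => isClosed_le continuous_const (continuous_apply i)
    have e2 : IsClosed {r : Fin n → ℝ | ∀ i j : Fin n, i < j → r i + δ ≤ r j} := by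
      have : {r : Fin n → ℝ | ∀ i j : Fin n, i < j → r i + δ ≤ r j}
          = ⋂ (i) (j) (_ : i < j), {r : Fin n → ℝ | r i + δ ≤ r j} := by ext r; simp
      rw [this]
      exact isClosed_iInter fun i => isClosed_iInter fun j => isClosed_iInter fun _ =>
        isClosed_le ((continuous_apply i).add continuous_const) (continuous_apply j)
    have e3 : IsClosed {r : Fin n → ℝ | Ifun n m r = 1} :=
      isClosed_eq hIcont continuous_const
    have : K = {r : Fin n → ℝ | ∀ i, δ ≤ r i} ∩
        ({r | ∀ i j : Fin n, i < j → r i + δ ≤ r j} ∩ {r | Ifun n m r = 1}) := by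
      ext r; simp [hKdef, Set.mem_setOf_eq, and_assoc]
    rw [this]
    exact e1.inter (e2.inter e3)
  -- boundedness
  set Rbd : ℝ := (Real.sqrt mmin)⁻¹ with hRbddef
  have hKbdd : K ⊆ Metric.closedBall 0 Rbd := by
    rintro r ⟨h1, h2, h3⟩
    have hrpos : ∀ i, 0 < r i := fun i => lt_of_lt_of_le hδ (h1 i)
    rw [Metric.mem_closedBall, dist_zero_right]
    rw [pi_norm_le_iff_of_nonneg (by positivity)]
    intro i
    have hb : m i * (r i)^2 ≤ 1 := by
      rw [← h3]
      exact Finset.single_le_sum (f := fun j => m j * (r j)^2)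
        (fun j _ => by have := hm j; have := hrpos j; positivity) (Finset.mem_univ i)
    have hsq : (r i)^2 ≤ mmin⁻¹ := by
      rw [← one_div]
      rw [le_div_iff₀ hmminpos]
      calc (r i)^2 * mmin ≤ (r i)^2 * m i := by nlinarith [sq_nonneg (r i), hmminle i]
        _ ≤ 1 := by linarith [hb]
    have : |r i| ≤ Real.sqrt mmin⁻¹ := by
      rw [← Real.sqrt_sq_eq_abs]
      exact Real.sqrt_le_sqrt hsq
    rw [Real.norm_eq_abs]
    rwa [Real.sqrt_inv] at this
  have hKcompact : IsCompact K :=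
    IsCompact.of_isClosed_subset (isCompact_closedBall 0 Rbd) hKclosed hKbdd
  -- continuity of U on K
  have hUcont : ContinuousOn (Ufun ℓ n m0 m) K := by
    unfold Ufun
    apply ContinuousOn.add
    · refine continuousOn_finset_sum _ fun i _ => ContinuousOn.mul continuousOn_const ?_
      refine ContinuousOn.inv₀ (continuous_apply i).continuousOn fun r hr => ?_
      exact ne_of_gt (lt_of_lt_of_le hδ (hr.1 i))
    · refine ContinuousOn.mul continuousOn_const ?_
      refine continuousOn_finset_sum _ fun i _ => continuousOn_finset_sum _ fun j hj =>
        continuousOn_finset_sum _ fun k _ => ContinuousOn.mul continuousOn_const ?_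
      have hq : Continuous (fun r : Fin n → ℝ => qf ℓ k (r i) (r j)) := by
        unfold qf; fun_prop
      refine ContinuousOn.rpow_const hq.continuousOn fun r hr => Or.inl ?_
      have hrRn := (hKsub r hr).1
      have hij : r i ≠ r j := by
        have : j ≠ i := (Finset.mem_erase.1 hj).1
        exact fun hEq => this (hrRn.2.injective hEq.symm)
      exact ne_of_gt (qf_pos ℓ k (r i) (r j) (hrRn.1 i) (hrRn.1 j) hij)
  obtain ⟨x, hxK, hxmin⟩ := hKcompact.exists_isMinOn ⟨r₀, hKr₀⟩ hUcont
  obtain ⟨hxRn, hxI⟩ := hKsub x hxK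
  refine ⟨x, hxRn, hxI, fun r hrRn hrI => ?_⟩
  by_cases hUr : Ufun ℓ n m0 m r ≤ c
  · -- then r ∈ K
    have hrpos := hrRn.1
    have hfirst_le : ∀ i, (m0 * m i + m i^2 * zeta ℓ / (2:ℝ)^((3:ℝ)/2)) * (r i)⁻¹
        ≤ Ufun ℓ n m0 m r := by
      intro i
      have h1 : (m0 * m i + m i^2 * zeta ℓ / (2:ℝ)^((3:ℝ)/2)) * (r i)⁻¹
          ≤ ∑ i, (m0 * m i + m i^2 * zeta ℓ / (2:ℝ)^((3:ℝ)/2)) * (r i)⁻¹ :=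
        Finset.single_le_sum (fun i _ => first_nonneg hℓ m0 hm0 m hm r (fun i => (hrpos i).le) i)
          (Finset.mem_univ i)
      have h2 := inter_nonneg ℓ m hm r (fun i => (hrpos i).le)
      unfold Ufun; linarith
    have hrK : r ∈ K := by
      refine ⟨fun i => ?_, fun i j hij => ?_, hrI⟩
      · -- δ ≤ r i
        have h1 := hfirst_le i
        have h2 : m i^2 * zeta ℓ / (2:ℝ)^((3:ℝ)/2) * (r i)⁻¹ ≤ c := by
          have h3 : 0 ≤ m0 * m i * (r i)⁻¹ := by
            have := (hm i).le
            have := (hrpos i).le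
            positivity
          have hexp : (m0 * m i + m i^2 * zeta ℓ / (2:ℝ)^((3:ℝ)/2)) * (r i)⁻¹
              = m0 * m i * (r i)⁻¹ + m i^2 * zeta ℓ / (2:ℝ)^((3:ℝ)/2) * (r i)⁻¹ := by ring
          rw [hexp] at h1
          linarith
        have h4 : m i^2 * zeta ℓ / (2:ℝ)^((3:ℝ)/2) ≤ c * r i := by
          have h4' := mul_le_mul_of_nonneg_right h2 (hrpos i).le
          rwa [mul_assoc, inv_mul_cancel₀ (ne_of_gt (hrpos i)), mul_one] at h4'
        have h5 : δa ≤ r i := by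
          rw [hδadef, div_le_iff₀ (mul_pos h232 hc)]
          have h6 : mmin^2 ≤ m i^2 := by nlinarith [hmminle i, hmminpos, hm i]
          have h7 : m i^2 * zeta ℓ ≤ (2:ℝ)^((3:ℝ)/2) * (c * r i) := by
            have := mul_le_mul_of_nonneg_left h4 h232.le
            calc m i^2 * zeta ℓ = (2:ℝ)^((3:ℝ)/2) * (m i^2 * zeta ℓ / (2:ℝ)^((3:ℝ)/2)) := by
                  field_simp
              _ ≤ (2:ℝ)^((3:ℝ)/2) * (c * r i) := this
          nlinarith [mul_le_mul_of_nonneg_right h6 hζ.le]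
        linarith [hδδa]
      · -- gap
        have hij' : r i < r j := hrRn.2 hij
        have hterm : (1/2) * (m i * m j * (qf ℓ 0 (r i) (r j)) ^ (-(1/2):ℝ)) ≤ c := by
          have h1 : m i * m j * (qf ℓ 0 (r i) (r j)) ^ (-(1/2):ℝ)
              ≤ ∑ a, ∑ b ∈ Finset.univ.erase a, ∑ k ∈ Finset.range ℓ,
                  m a * m b * (qf ℓ k (r a) (r b)) ^ (-(1/2):ℝ) := by
            refine single_le_triple_sum (ℓ := ℓ)
              (fun a b k => m a * m b * (qf ℓ k (r a) (r b)) ^ (-(1/2):ℝ))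
              (fun a b k => ?_) i j 0 hij.ne' (by omega)
            have h2 := Real.rpow_nonneg (qf_nonneg ℓ k (r a) (r b) (hrpos a).le (hrpos b).le)
              (-(1/2):ℝ)
            have := (hm a).le; have := (hm b).le
            positivity
          have h2 : 0 ≤ ∑ i, (m0 * m i + m i^2 * zeta ℓ / (2:ℝ)^((3:ℝ)/2)) * (r i)⁻¹ :=
            Finset.sum_nonneg fun i _ => first_nonneg hℓ m0 hm0 m hm r (fun i => (hrpos i).le) i
          unfold Ufun at hUr
          linarith
        have hq0 : qf ℓ 0 (r i) (r j) = (r j - r i)^2 := by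
          rw [qf_zero]; ring
        rw [hq0, sq_rpow_neg_half _ (by linarith)] at hterm
        have h7 : mmin^2 ≤ m i * m j := by nlinarith [hmminle i, hmminle j, hmminpos, hm i, hm j]
        have h9 : 0 < r j - r i := by linarith
        have h8 : m i * m j ≤ 2 * c * (r j - r i) := by
          have e : (r j - r i)⁻¹ * (r j - r i) = 1 := inv_mul_cancel₀ (ne_of_gt h9)
          have h10 := mul_le_mul_of_nonneg_right hterm h9.le
          nlinarith [h10, e]
        have : δb ≤ r j - r i := by
          rw [hδbdef, div_le_iff₀ (by linarith : (0:ℝ) < 2*c)]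
          nlinarith
        linarith [hδδb]
    exact isMinOn_iff.mp hxmin r hrK
  · push_neg at hUr
    have := isMinOn_iff.mp hxmin r₀ hKr₀
    linarith

lemma split1 {n : ℕ} (g : Fin n → Fin n → ℝ) (i₀ : Fin n) :
    ∑ a, ∑ b ∈ Finset.univ.erase a, (if a = i₀ then g a b else 0)
      = ∑ b ∈ Finset.univ.erase i₀, g i₀ b := by
  have e : ∀ a : Fin n, ∑ b ∈ Finset.univ.erase a, (if a = i₀ then g a b else 0)
      = if a = i₀ then (∑ b ∈ Finset.univ.erase a, g a b) else 0 := by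
    intro a; split <;> simp
  rw [Finset.sum_congr rfl (fun a _ => e a)]
  simp

lemma split2 {n : ℕ} (g : Fin n → Fin n → ℝ) (i₀ : Fin n) :
    ∑ a, ∑ b ∈ Finset.univ.erase a, (if b = i₀ then g a b else 0)
      = ∑ a ∈ Finset.univ.erase i₀, g a i₀ := by
  have e : ∀ a : Fin n, ∑ b ∈ Finset.univ.erase a, (if b = i₀ then g a b else 0)
      = if a = i₀ then 0 else g a i₀ := by
    intro a
    rw [Finset.sum_ite_eq' (Finset.univ.erase a) i₀ (g a)]
    by_cases h : a = i₀ <;> simp [Finset.mem_erase, h, Ne.symm]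
  rw [Finset.sum_congr rfl (fun a _ => e a)]
  calc ∑ a, (if a = i₀ then 0 else g a i₀)
      = ∑ a ∈ Finset.univ.erase i₀, (if a = i₀ then 0 else g a i₀) :=
        (Finset.sum_erase Finset.univ (by simp)).symm
    _ = ∑ a ∈ Finset.univ.erase i₀, g a i₀ :=
        Finset.sum_congr rfl (fun a ha => by simp [(Finset.mem_erase.1 ha).1])


noncomputable abbrev pr (n : ℕ) (i : Fin n) : (Fin n → ℝ) →L[ℝ] ℝ :=
  ContinuousLinearMap.proj (R := ℝ) (φ := fun _ : Fin n => ℝ) i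

lemma hs_qf (n ℓ : ℕ) (k : ℕ) (i j : Fin n) (x : Fin n → ℝ) :
    HasStrictFDerivAt (fun r : Fin n → ℝ => qf ℓ k (r i) (r j))
      ((2*x i - 2*Real.cos (theta ℓ k)*x j) • pr n i
        + (2*x j - 2*Real.cos (theta ℓ k)*x i) • pr n j) x := by
  have e : (fun r : Fin n → ℝ => qf ℓ k (r i) (r j))
      = fun r => r i * r i + r j * r j - 2*Real.cos (theta ℓ k)*(r i * r j) := by
    funext r; unfold qf; ring
  rw [e]
  have hi := (pr n i).hasStrictFDerivAt (x := x)
  have hj := (pr n j).hasStrictFDerivAt (x := x)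
  have h := ((hi.mul hi).add (hj.mul hj)).sub
    ((hi.mul hj).const_mul (2*Real.cos (theta ℓ k)))
  refine h.congr_fderiv ?_
  ext v
  simp [ContinuousLinearMap.smul_apply, ContinuousLinearMap.add_apply]
  ring

lemma derivU (n ℓ : ℕ) (m0 : ℝ) (m : Fin n → ℝ)
    (x : Fin n → ℝ) (hxpos : ∀ i, 0 < x i) (hxinj : Function.Injective x) :
    ∃ DU : (Fin n → ℝ) →L[ℝ] ℝ,
      HasStrictFDerivAt (Ufun ℓ n m0 m) DU x ∧
      ∀ i, DU (Pi.single i 1) = m i * x i * lamCfg ℓ n m0 m x i := by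
  have h232 : (0:ℝ) < (2:ℝ)^((3:ℝ)/2) := Real.rpow_pos_of_pos (by norm_num) _
  -- first part derivative
  have hD1 : HasStrictFDerivAt
      (fun r : Fin n → ℝ => ∑ i, (m0 * m i + m i^2 * zeta ℓ / (2:ℝ)^((3:ℝ)/2)) * (r i)⁻¹)
      (∑ i, ((m0 * m i + m i^2 * zeta ℓ / (2:ℝ)^((3:ℝ)/2)) * (-(x i^2)⁻¹)) • pr n i) x := by
    refine HasStrictFDerivAt.fun_sum fun i _ => ?_
    have h1 : HasStrictFDerivAt (fun r : Fin n → ℝ => (r i)⁻¹) ((-(x i^2)⁻¹) • pr n i) x :=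
      (hasStrictDerivAt_inv (ne_of_gt (hxpos i))).comp_hasStrictFDerivAt x
        (pr n i).hasStrictFDerivAt
    have h2 := h1.const_mul (m0 * m i + m i^2 * zeta ℓ / (2:ℝ)^((3:ℝ)/2))
    refine h2.congr_fderiv ?_
    rw [smul_smul]
  -- interaction part derivative
  have hD2 : HasStrictFDerivAt
      (fun r : Fin n → ℝ => ∑ i, ∑ j ∈ Finset.univ.erase i, ∑ k ∈ Finset.range ℓ,
        m i * m j * (qf ℓ k (r i) (r j)) ^ (-(1/2) : ℝ))
      (∑ i, ∑ j ∈ Finset.univ.erase i, ∑ k ∈ Finset.range ℓ,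
        (m i * m j * (-(1/2) * (qf ℓ k (x i) (x j)) ^ (-(1/2) - 1 : ℝ))) •
          ((2*x i - 2*Real.cos (theta ℓ k)*x j) • pr n i
            + (2*x j - 2*Real.cos (theta ℓ k)*x i) • pr n j)) x := by
    refine HasStrictFDerivAt.fun_sum fun i _ => HasStrictFDerivAt.fun_sum fun j hj =>
      HasStrictFDerivAt.fun_sum fun k _ => ?_
    have hji : j ≠ i := (Finset.mem_erase.1 hj).1
    have hne : x i ≠ x j := fun h => hji (hxinj h).symm
    have hq : 0 < qf ℓ k (x i) (x j) := qf_pos ℓ k (x i) (x j) (hxpos i) (hxpos j) hne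
    have hrp : HasStrictDerivAt (fun y : ℝ => y ^ (-(1/2) : ℝ))
        ((-(1/2) : ℝ) * (qf ℓ k (x i) (x j)) ^ (-(1/2) - 1 : ℝ)) (qf ℓ k (x i) (x j)) :=
      Real.hasStrictDerivAt_rpow_const (Or.inl (ne_of_gt hq))
    have hcomp := (hrp.comp_hasStrictFDerivAt x (hs_qf n ℓ k i j x)).const_mul (m i * m j)
    refine hcomp.congr_fderiv ?_
    rw [smul_smul]
  have hU : HasStrictFDerivAt (Ufun ℓ n m0 m)
      ((∑ i, ((m0 * m i + m i^2 * zeta ℓ / (2:ℝ)^((3:ℝ)/2)) * (-(x i^2)⁻¹)) • pr n i)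
        + (1/2 : ℝ) • (∑ i, ∑ j ∈ Finset.univ.erase i, ∑ k ∈ Finset.range ℓ,
          (m i * m j * (-(1/2) * (qf ℓ k (x i) (x j)) ^ (-(1/2) - 1 : ℝ))) •
            ((2*x i - 2*Real.cos (theta ℓ k)*x j) • pr n i
              + (2*x j - 2*Real.cos (theta ℓ k)*x i) • pr n j))) x := by
    unfold Ufun
    exact hD1.add (hD2.const_mul (1/2 : ℝ))
  refine ⟨_, hU, fun i₀ => ?_⟩
  have hx0 : x i₀ ≠ 0 := ne_of_gt (hxpos i₀)
  -- canonical interaction sum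
  set Scan : ℝ := ∑ j ∈ Finset.univ.erase i₀, ∑ k ∈ Finset.range ℓ,
    m j * (x i₀ - x j * Real.cos (theta ℓ k)) * ((qf ℓ k (x i₀) (x j)) ^ ((3:ℝ)/2))⁻¹
    with hScan
  -- evaluate the derivative
  have heval : ((∑ i, ((m0 * m i + m i^2 * zeta ℓ / (2:ℝ)^((3:ℝ)/2)) * (-(x i^2)⁻¹)) • pr n i)
        + (1/2 : ℝ) • (∑ i, ∑ j ∈ Finset.univ.erase i, ∑ k ∈ Finset.range ℓ,
          (m i * m j * (-(1/2) * (qf ℓ k (x i) (x j)) ^ (-(1/2) - 1 : ℝ))) •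
            ((2*x i - 2*Real.cos (theta ℓ k)*x j) • pr n i
              + (2*x j - 2*Real.cos (theta ℓ k)*x i) • pr n j))) (Pi.single i₀ 1)
      = (m0 * m i₀ + m i₀^2 * zeta ℓ / (2:ℝ)^((3:ℝ)/2)) * (-(x i₀^2)⁻¹)
        - m i₀ * Scan := by
    have hrw : ∀ y : ℝ, 0 < y → y ^ (-(1/2) - 1 : ℝ) = (y ^ ((3:ℝ)/2))⁻¹ := by
      intro y hy
      rw [show (-(1/2) - 1 : ℝ) = -((3:ℝ)/2) by norm_num, Real.rpow_neg hy.le]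
    have hqcomm : ∀ (k : ℕ) (a b : ℝ), qf ℓ k a b = qf ℓ k b a := by
      intro k a b; unfold qf; ring
    have step1 : ((∑ i, ((m0 * m i + m i^2 * zeta ℓ / (2:ℝ)^((3:ℝ)/2)) * (-(x i^2)⁻¹)) • pr n i)
        + (1/2 : ℝ) • (∑ i, ∑ j ∈ Finset.univ.erase i, ∑ k ∈ Finset.range ℓ,
          (m i * m j * (-(1/2) * (qf ℓ k (x i) (x j)) ^ (-(1/2) - 1 : ℝ))) •
            ((2*x i - 2*Real.cos (theta ℓ k)*x j) • pr n i
              + (2*x j - 2*Real.cos (theta ℓ k)*x i) • pr n j))) (Pi.single i₀ 1)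
        = (∑ a, (if a = i₀ then (m0 * m a + m a^2 * zeta ℓ / (2:ℝ)^((3:ℝ)/2)) * (-(x a^2)⁻¹) else 0))
          + (1/2 : ℝ) * ∑ a, ∑ b ∈ Finset.univ.erase a, ∑ k ∈ Finset.range ℓ,
            (m a * m b * (-(1/2) * (qf ℓ k (x a) (x b)) ^ (-(1/2) - 1 : ℝ))) *
              ((2*x a - 2*Real.cos (theta ℓ k)*x b) * (if a = i₀ then 1 else 0)
                + (2*x b - 2*Real.cos (theta ℓ k)*x a) * (if b = i₀ then 1 else 0)) := by
      simp only [ContinuousLinearMap.add_apply, ContinuousLinearMap.smul_apply,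
        ContinuousLinearMap.sum_apply, ContinuousLinearMap.proj_apply, Pi.single_apply,
        smul_eq_mul, mul_ite, mul_one, mul_zero]
    rw [step1]
    have inner : ∀ a b : Fin n, ∑ k ∈ Finset.range ℓ,
        (m a * m b * (-(1/2) * (qf ℓ k (x a) (x b)) ^ (-(1/2) - 1 : ℝ))) *
          ((2*x a - 2*Real.cos (theta ℓ k)*x b) * (if a = i₀ then 1 else 0)
            + (2*x b - 2*Real.cos (theta ℓ k)*x a) * (if b = i₀ then 1 else 0))
        = (if a = i₀ then ∑ k ∈ Finset.range ℓ,
            (m a * m b * (-(1/2) * (qf ℓ k (x a) (x b)) ^ (-(1/2) - 1 : ℝ))) *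
              (2*x a - 2*Real.cos (theta ℓ k)*x b) else 0)
          + (if b = i₀ then ∑ k ∈ Finset.range ℓ,
            (m a * m b * (-(1/2) * (qf ℓ k (x a) (x b)) ^ (-(1/2) - 1 : ℝ))) *
              (2*x b - 2*Real.cos (theta ℓ k)*x a) else 0) := by
      intro a b
      split_ifs with h1 h2 h3
      · rw [← Finset.sum_add_distrib]
        exact Finset.sum_congr rfl fun k _ => by ring
      · rw [add_zero]
        exact Finset.sum_congr rfl fun k _ => by ring
      · rw [zero_add]
        exact Finset.sum_congr rfl fun k _ => by ring
      · rw [add_zero]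
        refine Eq.trans (Finset.sum_congr rfl fun k _ => by ring) Finset.sum_const_zero
    rw [Finset.sum_congr rfl (fun a _ => Finset.sum_congr rfl (fun b _ => inner a b))]
    have splitsum : ∑ a, ∑ b ∈ Finset.univ.erase a,
        ((if a = i₀ then ∑ k ∈ Finset.range ℓ,
            (m a * m b * (-(1/2) * (qf ℓ k (x a) (x b)) ^ (-(1/2) - 1 : ℝ))) *
              (2*x a - 2*Real.cos (theta ℓ k)*x b) else 0)
          + (if b = i₀ then ∑ k ∈ Finset.range ℓ,
            (m a * m b * (-(1/2) * (qf ℓ k (x a) (x b)) ^ (-(1/2) - 1 : ℝ))) *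
              (2*x b - 2*Real.cos (theta ℓ k)*x a) else 0))
        = (∑ b ∈ Finset.univ.erase i₀, ∑ k ∈ Finset.range ℓ,
            (m i₀ * m b * (-(1/2) * (qf ℓ k (x i₀) (x b)) ^ (-(1/2) - 1 : ℝ))) *
              (2*x i₀ - 2*Real.cos (theta ℓ k)*x b))
          + (∑ a ∈ Finset.univ.erase i₀, ∑ k ∈ Finset.range ℓ,
            (m a * m i₀ * (-(1/2) * (qf ℓ k (x a) (x i₀)) ^ (-(1/2) - 1 : ℝ))) *
              (2*x i₀ - 2*Real.cos (theta ℓ k)*x a)) := by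
      rw [Finset.sum_congr rfl (fun a _ => Finset.sum_add_distrib), Finset.sum_add_distrib,
        split1 (fun a b => ∑ k ∈ Finset.range ℓ,
          (m a * m b * (-(1/2) * (qf ℓ k (x a) (x b)) ^ (-(1/2) - 1 : ℝ))) *
            (2*x a - 2*Real.cos (theta ℓ k)*x b)) i₀,
        split2 (fun a b => ∑ k ∈ Finset.range ℓ,
          (m a * m b * (-(1/2) * (qf ℓ k (x a) (x b)) ^ (-(1/2) - 1 : ℝ))) *
            (2*x b - 2*Real.cos (theta ℓ k)*x a)) i₀]
    rw [splitsum]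
    have hS1 : (∑ b ∈ Finset.univ.erase i₀, ∑ k ∈ Finset.range ℓ,
        (m i₀ * m b * (-(1/2) * (qf ℓ k (x i₀) (x b)) ^ (-(1/2) - 1 : ℝ))) *
          (2*x i₀ - 2*Real.cos (theta ℓ k)*x b)) = -(m i₀ * Scan) := by
      rw [hScan, Finset.mul_sum, ← Finset.sum_neg_distrib]
      refine Finset.sum_congr rfl fun b hb => ?_
      rw [Finset.mul_sum, ← Finset.sum_neg_distrib]
      refine Finset.sum_congr rfl fun k _ => ?_
      have hbne : x i₀ ≠ x b := fun h =>
        (Finset.mem_erase.1 hb).1 (hxinj h).symm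
      have hq : 0 < qf ℓ k (x i₀) (x b) :=
        qf_pos ℓ k (x i₀) (x b) (hxpos i₀) (hxpos b) hbne
      rw [hrw _ hq]
      ring
    have hS2 : (∑ a ∈ Finset.univ.erase i₀, ∑ k ∈ Finset.range ℓ,
        (m a * m i₀ * (-(1/2) * (qf ℓ k (x a) (x i₀)) ^ (-(1/2) - 1 : ℝ))) *
          (2*x i₀ - 2*Real.cos (theta ℓ k)*x a)) = -(m i₀ * Scan) := by
      rw [hScan, Finset.mul_sum, ← Finset.sum_neg_distrib]
      refine Finset.sum_congr rfl fun a ha => ?_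
      rw [Finset.mul_sum, ← Finset.sum_neg_distrib]
      refine Finset.sum_congr rfl fun k _ => ?_
      have hane : x i₀ ≠ x a := fun h =>
        (Finset.mem_erase.1 ha).1 (hxinj h).symm
      have hq : 0 < qf ℓ k (x i₀) (x a) :=
        qf_pos ℓ k (x i₀) (x a) (hxpos i₀) (hxpos a) hane
      rw [hqcomm k (x a) (x i₀), hrw _ hq]
      ring
    rw [hS1, hS2, Finset.sum_ite_eq' Finset.univ i₀]
    simp only [Finset.mem_univ, if_true]
    ring
  have hlam : m i₀ * x i₀ * lamCfg ℓ n m0 m x i₀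
      = (m0 * m i₀ + m i₀^2 * zeta ℓ / (2:ℝ)^((3:ℝ)/2)) * (-(x i₀^2)⁻¹) - m i₀ * Scan := by
    have hsum_eq : (∑ j ∈ Finset.univ.erase i₀, ∑ k ∈ Finset.range ℓ,
        m j * (x i₀ - x j * Real.cos (theta ℓ k)) /
          ((x i₀) ^ 2 + (x j) ^ 2 - 2 * x i₀ * x j * Real.cos (theta ℓ k)) ^ ((3 : ℝ) / 2))
        = Scan := by
      rw [hScan]
      refine Finset.sum_congr rfl fun j _ => Finset.sum_congr rfl fun k _ => ?_
      unfold qf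
      rw [div_eq_mul_inv]
    unfold lamCfg
    rw [hsum_eq]
    field_simp
    ring
  rw [heval]
  rw [hlam]


lemma derivI (n : ℕ) (m : Fin n → ℝ) (x : Fin n → ℝ) :
    ∃ DI : (Fin n → ℝ) →L[ℝ] ℝ,
      HasStrictFDerivAt (Ifun n m) DI x ∧
      ∀ i, DI (Pi.single i 1) = 2 * (m i * x i) := by
  have e : Ifun n m = fun r : Fin n → ℝ => ∑ i, m i * (r i * r i) := by
    funext r
    exact Finset.sum_congr rfl fun i _ => by rw [sq]
  refine ⟨∑ i, (m i) • ((x i) • pr n i + (x i) • pr n i), ?_, ?_⟩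
  · rw [e]
    refine HasStrictFDerivAt.fun_sum fun i _ => ?_
    have hi := (pr n i).hasStrictFDerivAt (x := x)
    exact (hi.mul hi).const_mul (m i)
  · intro i₀
    simp only [ContinuousLinearMap.sum_apply, ContinuousLinearMap.smul_apply,
      ContinuousLinearMap.add_apply, ContinuousLinearMap.proj_apply, Pi.single_apply,
      smul_eq_mul, mul_ite, mul_one, mul_zero]
    rw [Finset.sum_congr rfl (fun a (_ : a ∈ Finset.univ) =>
      (by split_ifs <;> ring :
        m a * ((if a = i₀ then x a else 0) + (if a = i₀ then x a else 0))
          = if a = i₀ then 2 * (m a * x a) else 0)),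
      Finset.sum_ite_eq' Finset.univ i₀]
    simp

lemma lamCfg_neg (n ℓ : ℕ) (hn : 1 ≤ n) (hℓ : 2 ≤ ℓ) (m0 : ℝ) (hm0 : 0 ≤ m0)
    (m : Fin n → ℝ) (hm : ∀ i, 0 < m i) (x : Fin n → ℝ) (hx : x ∈ Rn n) :
    lamCfg ℓ n m0 m x ⟨n-1, by omega⟩ < 0 := by
  obtain ⟨hxpos, hxmono⟩ := hx
  set iL : Fin n := ⟨n-1, by omega⟩ with hiL
  have hζ := zeta_pos ℓ hℓ
  have h232 : (0:ℝ) < (2:ℝ)^((3:ℝ)/2) := Real.rpow_pos_of_pos (by norm_num) _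
  have hxL := hxpos iL
  have hS : 0 ≤ ∑ j ∈ Finset.univ.erase iL, ∑ k ∈ Finset.range ℓ,
      m j * (x iL - x j * Real.cos (theta ℓ k)) /
        ((x iL) ^ 2 + (x j) ^ 2 - 2 * x iL * x j * Real.cos (theta ℓ k)) ^ ((3 : ℝ) / 2) := by
    refine Finset.sum_nonneg fun j hj => Finset.sum_nonneg fun k _ => ?_
    have hjne : j ≠ iL := (Finset.mem_erase.1 hj).1
    have hjlt : j < iL := by
      rw [Fin.lt_def]
      have h1 : (j : ℕ) < n := j.isLt
      have h2 : (j : ℕ) ≠ n - 1 := fun h => hjne (Fin.ext h)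
      simp only [hiL]
      omega
    have hxj := hxpos j
    have hxlt : x j < x iL := hxmono hjlt
    have hcos := Real.cos_le_one (theta ℓ k)
    have hnum : 0 ≤ x iL - x j * Real.cos (theta ℓ k) := by nlinarith
    have hq : 0 < (x iL) ^ 2 + (x j) ^ 2 - 2 * x iL * x j * Real.cos (theta ℓ k) := by
      have := qf_pos ℓ k (x iL) (x j) hxL hxj (ne_of_gt hxlt)
      unfold qf at this
      linarith
    have := Real.rpow_pos_of_pos hq ((3:ℝ)/2)
    have := (hm j).le
    positivity
  have hbr : -(m0 / (x iL) ^ 2) - m iL * zeta ℓ / ((2 : ℝ) ^ ((3 : ℝ) / 2) * (x iL) ^ 2)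
      - (∑ j ∈ Finset.univ.erase iL, ∑ k ∈ Finset.range ℓ,
        m j * (x iL - x j * Real.cos (theta ℓ k)) /
          ((x iL) ^ 2 + (x j) ^ 2 - 2 * x iL * x j * Real.cos (theta ℓ k)) ^ ((3 : ℝ) / 2)) < 0 := by
    have h1 : 0 ≤ m0 / (x iL)^2 := by positivity
    have h2 : 0 < m iL * zeta ℓ / ((2 : ℝ) ^ ((3 : ℝ) / 2) * (x iL) ^ 2) := by
      have := hm iL
      positivity
    linarith
  unfold lamCfg
  have h1x : 0 < 1 / x iL := by positivity
  exact mul_neg_of_pos_of_neg h1x hbr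

lemma lamCfg_scale (n ℓ : ℕ) (m0 : ℝ) (m : Fin n → ℝ) (x : Fin n → ℝ)
    (hxpos : ∀ i, 0 < x i) (hxinj : Function.Injective x) (c : ℝ) (hc : 0 < c) (i : Fin n) :
    lamCfg ℓ n m0 m (fun j => c * x j) i = (c^3)⁻¹ * lamCfg ℓ n m0 m x i := by
  have hc0 : c ≠ 0 := ne_of_gt hc
  have hx0 : x i ≠ 0 := ne_of_gt (hxpos i)
  have h232 : (0:ℝ) < (2:ℝ)^((3:ℝ)/2) := Real.rpow_pos_of_pos (by norm_num) _
  have hc3 : ((c^2 : ℝ)) ^ ((3:ℝ)/2) = c^3 := by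
    rw [← Real.rpow_natCast c 2, ← Real.rpow_mul hc.le]
    have h23 : (((2:ℕ):ℝ) * (3/2)) = ((3:ℕ):ℝ) := by norm_num
    rw [h23, Real.rpow_natCast]
  have hsum : (∑ j ∈ Finset.univ.erase i, ∑ k ∈ Finset.range ℓ,
      m j * (c * x i - c * x j * Real.cos (theta ℓ k)) /
        ((c * x i) ^ 2 + (c * x j) ^ 2 - 2 * (c * x i) * (c * x j) * Real.cos (theta ℓ k))
          ^ ((3 : ℝ) / 2))
      = (c^2)⁻¹ * ∑ j ∈ Finset.univ.erase i, ∑ k ∈ Finset.range ℓ,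
        m j * (x i - x j * Real.cos (theta ℓ k)) /
          ((x i) ^ 2 + (x j) ^ 2 - 2 * x i * x j * Real.cos (theta ℓ k)) ^ ((3 : ℝ) / 2) := by
    rw [Finset.mul_sum]
    refine Finset.sum_congr rfl fun j hj => ?_
    rw [Finset.mul_sum]
    refine Finset.sum_congr rfl fun k _ => ?_
    have hne : x i ≠ x j := fun h => (Finset.mem_erase.1 hj).1 (hxinj h).symm
    have hq : 0 < (x i) ^ 2 + (x j) ^ 2 - 2 * x i * x j * Real.cos (theta ℓ k) := by
      have := qf_pos ℓ k (x i) (x j) (hxpos i) (hxpos j) hne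
      unfold qf at this
      linarith
    have hbase : (c * x i) ^ 2 + (c * x j) ^ 2 - 2 * (c * x i) * (c * x j) * Real.cos (theta ℓ k)
        = c^2 * ((x i) ^ 2 + (x j) ^ 2 - 2 * x i * x j * Real.cos (theta ℓ k)) := by ring
    rw [hbase, Real.mul_rpow (by positivity) hq.le, hc3]
    have hqr := Real.rpow_pos_of_pos hq ((3:ℝ)/2)
    field_simp
  unfold lamCfg
  simp only []
  rw [hsum]
  have hqζ : (2:ℝ)^((3:ℝ)/2) ≠ 0 := ne_of_gt h232
  field_simp


/-- For any `ℓ ≥ 2`, `1 ≤ n ≤ 4`, `m0 ≥ 0`, positive masses and `λ < 0`, an `n×ℓ+1`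
spiderweb central configuration with multiplier `λ` exists. -/
theorem spiderweb_exists_n_le_four (n ℓ : ℕ) (hn : 1 ≤ n) (hn4 : n ≤ 4) (hℓ : 2 ≤ ℓ)
    (m0 : ℝ) (hm0 : 0 ≤ m0) (m : Fin n → ℝ) (hm : ∀ i, 0 < m i)
    (lam : ℝ) (hlam : lam < 0) :
    ∃ r ∈ Rn n, ∀ i, lamCfg ℓ n m0 m r i = lam := by
  obtain ⟨x, hxRn, hxI, hxmin⟩ := exists_min n ℓ hn hℓ m0 hm0 m hm
  obtain ⟨DU, hDU, hDUeval⟩ := derivU n ℓ m0 m x hxRn.1 hxRn.2.injective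
  obtain ⟨DI, hDI, hDIeval⟩ := derivI n m x
  -- x is a local minimum of U on the level set of I
  have hextr : IsLocalExtrOn (Ufun ℓ n m0 m) {r | Ifun n m r = Ifun n m x} x := by
    left
    have hmem : Rn n ∈ nhdsWithin x {r | Ifun n m r = Ifun n m x} :=
      mem_nhdsWithin_of_mem_nhds ((isOpen_Rn n).mem_nhds hxRn)
    filter_upwards [hmem, self_mem_nhdsWithin] with y hy1 hy2
    exact hxmin y hy1 (by rw [hy2, hxI])
  obtain ⟨a, b, hab, hcomb⟩ := hextr.exists_multipliers_of_hasStrictFDerivAt_1d hDI hDU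
  have happ : ∀ i, a * (2 * (m i * x i)) + b * (m i * x i * lamCfg ℓ n m0 m x i) = 0 := by
    intro i
    have h := ContinuousLinearMap.ext_iff.1 hcomb (Pi.single i 1)
    simpa [ContinuousLinearMap.add_apply, ContinuousLinearMap.smul_apply, smul_eq_mul,
      hDUeval i, hDIeval i] using h
  have hmx : ∀ i, m i * x i ≠ 0 := fun i => by
    have := hm i
    have := hxRn.1 i
    positivity
  have hb : b ≠ 0 := by
    intro h0
    have ha : a = 0 := by
      have h := happ ⟨0, by omega⟩
      rw [h0] at h
      have h2 := hmx ⟨0, by omega⟩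
      have : a * (2 * (m ⟨0, by omega⟩ * x ⟨0, by omega⟩)) = 0 := by linarith
      rcases mul_eq_zero.1 this with h3 | h3
      · exact h3
      · exact absurd (by linarith : m ⟨0, by omega⟩ * x ⟨0, by omega⟩ = 0) h2
    exact hab (by simp [ha, h0, Prod.ext_iff])
  set ν : ℝ := -(2*a)/b with hν
  have hconst : ∀ i, lamCfg ℓ n m0 m x i = ν := by
    intro i
    have h := happ i
    have h2 : (m i * x i) * (2*a + b * lamCfg ℓ n m0 m x i) = 0 := by linear_combination h
    rcases mul_eq_zero.1 h2 with h3 | h3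
    · exact absurd h3 (hmx i)
    · rw [hν, eq_div_iff hb]
      linear_combination h3
  have hνneg : ν < 0 := by
    rw [← hconst ⟨n-1, by omega⟩]
    exact lamCfg_neg n ℓ hn hℓ m0 hm0 m hm x hxRn
  -- rescale
  set c : ℝ := (ν/lam) ^ ((1:ℝ)/3) with hc
  have hνlam : 0 < ν / lam := div_pos_of_neg_of_neg hνneg hlam
  have hcpos : 0 < c := Real.rpow_pos_of_pos hνlam _
  have hc3 : c^3 = ν / lam := by
    rw [hc, ← Real.rpow_natCast ((ν/lam) ^ ((1:ℝ)/3)) 3, ← Real.rpow_mul hνlam.le]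
    norm_num
  have hν0 : ν ≠ 0 := ne_of_lt hνneg
  have hlam0 : lam ≠ 0 := ne_of_lt hlam
  refine ⟨fun j => c * x j, ⟨fun j => ?_, fun i j hij => ?_⟩, fun i => ?_⟩
  · show 0 < c * x j
    have := hxRn.1 j
    positivity
  · show c * x i < c * x j
    have h := hxRn.2 hij
    nlinarith
  · rw [lamCfg_scale n ℓ m0 m x hxRn.1 hxRn.2.injective c hcpos i, hconst i, hc3]
    field_simp
end

section
/- For every ν > 0 the function φ_ν is real-analytic on the interval (−1,1), and there exists a sequence (a_q)_{q≥0} of nonnegative real numbers such that φ_ν(x) = Σ_{q≥0} a_q x^q for every x ∈ (−1,1). In particular, for ν = 1 the first and second derivatives of φ_1 are strictly positive at every x ∈ (0,1). -/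
open Real BigOperators Finset

/-- `φ_ν(x) = Σ_{k=0}^{ℓ-1} (1 + x² - 2x cos θ_k)^{-ν/2}`. -/
noncomputable def phi (ℓ : ℕ) (ν : ℝ) (x : ℝ) : ℝ :=
  ∑ k ∈ Finset.range ℓ, (1 + x ^ 2 - 2 * x * Real.cos (theta ℓ k)) ^ (-(ν / 2))

open Filter

namespace PhiAux

noncomputable def bb (l : ℝ) (n : ℕ) : ℝ := (∏ i ∈ Finset.range n, (l + i)) / n.factorial

lemma bb_zero (l : ℝ) : bb l 0 = 1 := by simp [bb]

lemma bb_pos {l : ℝ} (hl : 0 < l) (n : ℕ) : 0 < bb l n := by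
  apply div_pos (Finset.prod_pos fun i _ => by positivity)
  exact_mod_cast Nat.factorial_pos n

lemma bb_succ (l : ℝ) (n : ℕ) : bb l (n + 1) = bb l n * (l + n) / (n + 1) := by
  have h1 : ((n + 1 : ℕ) : ℝ) ≠ 0 := by positivity
  have h2 : ((n.factorial : ℕ) : ℝ) ≠ 0 := by exact_mod_cast (Nat.factorial_pos n).ne'
  simp only [bb, Finset.prod_range_succ, Nat.factorial_succ]
  push_cast
  rw [div_mul_eq_mul_div, div_div]
  ring

lemma bb_rec (l : ℝ) (n : ℕ) : ((n : ℝ) + 1) * bb l (n + 1) = (l + n) * bb l n := by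
  have h1 : ((n : ℝ) + 1) ≠ 0 := by positivity
  rw [bb_succ]
  field_simp

lemma tendsto_ratio (l : ℝ) :
    Tendsto (fun n : ℕ => (l + n) / ((n : ℝ) + 1)) atTop (nhds 1) := by
  have h : ∀ n : ℕ, (l + n) / ((n : ℝ) + 1) = 1 + (l - 1) / ((n : ℝ) + 1) := by
    intro n
    have h1 : ((n : ℝ) + 1) ≠ 0 := by positivity
    field_simp
    ring
  simp only [h]
  have h2 : Tendsto (fun n : ℕ => (l - 1) / ((n : ℝ) + 1)) atTop (nhds 0) := by
    have hg : Tendsto (fun n : ℕ => (n : ℝ) + 1) atTop atTop :=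
      tendsto_atTop_add_const_right atTop 1 tendsto_natCast_atTop_atTop
    exact Tendsto.div_atTop tendsto_const_nhds hg
  simpa using tendsto_const_nhds.add h2

lemma summable_bb {l : ℝ} (hl : 0 < l) {s : ℝ} (h0 : 0 ≤ s) (h1 : s < 1) :
    Summable (fun n => bb l n * s ^ n) := by
  rcases eq_or_lt_of_le h0 with h | h
  · apply summable_of_ne_finset_zero (s := {0})
    intro n hn
    simp only [Finset.mem_singleton] at hn
    simp [← h, zero_pow hn]
  · apply summable_of_ratio_test_tendsto_lt_one h1
    · filter_upwards with n
      have := bb_pos hl n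
      positivity
    · have heq : (fun n : ℕ => ‖bb l (n + 1) * s ^ (n + 1)‖ / ‖bb l n * s ^ n‖)
          = fun n : ℕ => (l + n) / ((n : ℝ) + 1) * s := by
        funext n
        have hb := bb_pos hl n
        have hb' := bb_pos hl (n + 1)
        rw [Real.norm_of_nonneg (by positivity), Real.norm_of_nonneg (by positivity),
          bb_succ, pow_succ]
        have h1 : ((n : ℝ) + 1) ≠ 0 := by positivity
        field_simp
      rw [heq]
      simpa using (tendsto_ratio l).mul_const s


variable {𝕜 : Type*} [RCLike 𝕜]

lemma summable_shift (c : ℕ → 𝕜)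
    (h : ∀ s : ℝ, 0 ≤ s → s < 1 → Summable (fun q => ‖c q‖ * s ^ q))
    {r : ℝ} (h0 : 0 ≤ r) (h1 : r < 1) :
    Summable (fun q : ℕ => ((q : ℝ) + 1) * ‖c (q + 1)‖ * r ^ q) := by
  rcases eq_or_lt_of_le h0 with h' | h'
  · apply summable_of_ne_finset_zero (s := {0})
    intro n hn
    simp only [Finset.mem_singleton] at hn
    simp [← h', zero_pow hn]
  set r' : ℝ := (r + 1) / 2 with hr'def
  have hr0 : 0 < r' := by rw [hr'def]; linarith
  have hrr : r < r' := by rw [hr'def]; linarith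
  have hr1 : r' < 1 := by rw [hr'def]; linarith
  set M : ℝ := ∑' q, ‖c q‖ * r' ^ q with hMdef
  have hsum' := h r' hr0.le hr1
  have hM : ∀ q, ‖c q‖ * r' ^ q ≤ M := fun q =>
    Summable.le_tsum hsum' q (fun i _ => by positivity)
  have hx0 : 0 ≤ r / r' := by positivity
  have hx1 : r / r' < 1 := (div_lt_one hr0).2 hrr
  have hgeom : Summable (fun q : ℕ => ((q : ℝ) + 1) * (r / r') ^ q) := by
    have hA := summable_pow_mul_geometric_of_norm_lt_one (R := ℝ) 1
      (r := r / r') (by rwa [Real.norm_of_nonneg hx0])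
    have hB : Summable (fun q : ℕ => (r / r') ^ q) :=
      summable_geometric_of_lt_one hx0 hx1
    simpa [pow_one, add_mul, one_mul] using hA.add hB
  apply Summable.of_nonneg_of_le (fun q => by positivity) ?_ (hgeom.mul_left (M / r'))
  intro q
  have key : ‖c (q + 1)‖ * r' ^ q ≤ M / r' := by
    rw [le_div_iff₀ hr0]
    calc ‖c (q + 1)‖ * r' ^ q * r' = ‖c (q + 1)‖ * r' ^ (q + 1) := by ring
    _ ≤ M := hM (q + 1)
  have hrw : r ^ q = (r / r') ^ q * r' ^ q := by
    rw [div_pow, div_mul_cancel₀]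
    positivity
  calc ((q : ℝ) + 1) * ‖c (q + 1)‖ * r ^ q
      = (((q : ℝ) + 1) * (r / r') ^ q) * (‖c (q + 1)‖ * r' ^ q) := by rw [hrw]; ring
    _ ≤ (((q : ℝ) + 1) * (r / r') ^ q) * (M / r') := by
        apply mul_le_mul_of_nonneg_left key (by positivity)
    _ = M / r' * (((q : ℝ) + 1) * (r / r') ^ q) := by ring

lemma hasDerivAt_tsum_pow (c : ℕ → 𝕜)
    (h : ∀ s : ℝ, 0 ≤ s → s < 1 → Summable (fun q => ‖c q‖ * s ^ q))
    {x : 𝕜} (hx : ‖x‖ < 1) :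
    HasDerivAt (fun y => ∑' q, c q * y ^ q)
      (∑' q : ℕ, ((q : 𝕜) + 1) * c (q + 1) * x ^ q) x := by
  set r : ℝ := (‖x‖ + 1) / 2 with hrdef
  have hx0 : (0 : ℝ) ≤ ‖x‖ := norm_nonneg x
  have hr0 : 0 < r := by rw [hrdef]; linarith
  have hxr : ‖x‖ < r := by rw [hrdef]; linarith
  have hr1 : r < 1 := by rw [hrdef]; linarith
  set u : ℕ → ℝ := fun n => (n : ℝ) * ‖c n‖ * r ^ (n - 1) with hudef
  have hu : Summable u := by
    apply (summable_nat_add_iff 1).mp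
    have := summable_shift c h hr0.le hr1
    apply this.congr
    intro n
    simp only [hudef, Nat.add_sub_cancel, Nat.cast_add, Nat.cast_one]
  have hmem : ∀ y : 𝕜, y ∈ Metric.ball (0 : 𝕜) r ↔ ‖y‖ < r := by
    intro y; rw [Metric.mem_ball, dist_zero_right]
  have hderiv : HasDerivAt (fun y => ∑' q, c q * y ^ q)
      (∑' n, c n * ((n : 𝕜) * x ^ (n - 1))) x := by
    apply hasDerivAt_tsum_of_isPreconnected hu Metric.isOpen_ball
      ((convex_ball (0 : 𝕜) r).isPreconnected)
      (g := fun n y => c n * y ^ n) (g' := fun n y => c n * ((n : 𝕜) * y ^ (n - 1)))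
      ?_ ?_ ((hmem 0).2 (by simpa using hr0)) ?_ ((hmem x).2 hxr)
    · intro n y _
      exact (hasDerivAt_pow n y).const_mul (c n)
    · intro n y hy
      rw [hmem] at hy
      have : ‖c n * ((n : 𝕜) * y ^ (n - 1))‖ = ‖c n‖ * ((n : ℝ) * ‖y‖ ^ (n - 1)) := by
        simp [norm_mul, norm_pow]
      rw [this, hudef]
      have hyn : ‖y‖ ^ (n - 1) ≤ r ^ (n - 1) := pow_le_pow_left₀ (norm_nonneg y) hy.le _
      have : ‖c n‖ * ((n : ℝ) * ‖y‖ ^ (n - 1)) ≤ ‖c n‖ * ((n : ℝ) * r ^ (n - 1)) := by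
        apply mul_le_mul_of_nonneg_left ?_ (norm_nonneg _)
        exact mul_le_mul_of_nonneg_left hyn (Nat.cast_nonneg n)
      calc ‖c n‖ * ((n : ℝ) * ‖y‖ ^ (n - 1)) ≤ ‖c n‖ * ((n : ℝ) * r ^ (n - 1)) := this
        _ = (n : ℝ) * ‖c n‖ * r ^ (n - 1) := by ring
    · apply summable_of_ne_finset_zero (s := {0})
      intro n hn
      simp only [Finset.mem_singleton] at hn
      simp [zero_pow hn]
  have hsummand : Summable (fun n => c n * ((n : 𝕜) * x ^ (n - 1))) := by
    apply Summable.of_norm_bounded hu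
    intro n
    simp only [norm_mul, norm_pow, RCLike.norm_natCast, hudef]
    calc ‖c n‖ * ((n : ℝ) * ‖x‖ ^ (n - 1)) ≤ ‖c n‖ * ((n : ℝ) * r ^ (n - 1)) := by
          apply mul_le_mul_of_nonneg_left ?_ (norm_nonneg _)
          exact mul_le_mul_of_nonneg_left
            (pow_le_pow_left₀ (norm_nonneg x) hxr.le _) (Nat.cast_nonneg n)
      _ = (n : ℝ) * ‖c n‖ * r ^ (n - 1) := by ring
  have hshift : HasSum (fun n => c (n + 1) * (((n : 𝕜) + 1) * x ^ n))
      (∑' n, c n * ((n : 𝕜) * x ^ (n - 1))) := by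
    have hS := hsummand.hasSum
    have h2 : HasSum (fun n => c n * ((n : 𝕜) * x ^ (n - 1)))
        ((∑' n, c n * ((n : 𝕜) * x ^ (n - 1))) +
          ∑ i ∈ Finset.range 1, c i * ((i : 𝕜) * x ^ (i - 1))) := by
      simpa using hS
    have h3 := (hasSum_nat_add_iff (f := fun n => c n * ((n : 𝕜) * x ^ (n - 1))) 1).mpr h2
    simp only [Nat.add_sub_cancel, Nat.cast_add, Nat.cast_one] at h3
    exact h3
  convert hderiv using 1
  rw [← hshift.tsum_eq]
  congr 1
  funext n
  ring

noncomputable def GG (l : ℝ) (z : ℂ) : ℂ := ∑' n, (bb l n : ℂ) * z ^ n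

lemma norm_summable_bb {l : ℝ} (hl : 0 < l) :
    ∀ s : ℝ, 0 ≤ s → s < 1 → Summable (fun q => ‖((bb l q : ℝ) : ℂ)‖ * s ^ q) := by
  intro s h0 h1
  exact (summable_bb hl h0 h1).congr fun q => by
    rw [Complex.norm_real, Real.norm_of_nonneg (bb_pos hl q).le]

lemma summable_bb_c {l : ℝ} (hl : 0 < l) {z : ℂ} (hz : ‖z‖ < 1) :
    Summable (fun n => (bb l n : ℂ) * z ^ n) := by
  apply Summable.of_norm
  have := norm_summable_bb hl ‖z‖ (norm_nonneg z) hz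
  simpa [norm_mul, norm_pow] using this

lemma GG_hasDerivAt {l : ℝ} (hl : 0 < l) {z : ℂ} (hz : ‖z‖ < 1) :
    HasDerivAt (GG l) (∑' q : ℕ, ((q : ℂ) + 1) * (bb l (q + 1) : ℂ) * z ^ q) z :=
  hasDerivAt_tsum_pow (fun n => (bb l n : ℂ)) (norm_summable_bb hl) hz

lemma GG_ode {l : ℝ} (hl : 0 < l) {z : ℂ} (hz : ‖z‖ < 1) :
    (1 - z) * (∑' q : ℕ, ((q : ℂ) + 1) * (bb l (q + 1) : ℂ) * z ^ q) = l * GG l z := by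
  set G' : ℂ := ∑' q : ℕ, ((q : ℂ) + 1) * (bb l (q + 1) : ℂ) * z ^ q with hG'def
  have hsum0 : HasSum (fun n => (bb l n : ℂ) * z ^ n) (GG l z) := (summable_bb_c hl hz).hasSum
  have hsum1 : HasSum (fun q : ℕ => ((q : ℂ) + 1) * (bb l (q + 1) : ℂ) * z ^ q) G' := by
    apply Summable.hasSum
    apply Summable.of_norm
    have := summable_shift (fun n => (bb l n : ℂ)) (norm_summable_bb hl) (norm_nonneg z) hz
    apply this.congr
    intro n
    have h1 : ‖((n : ℂ) + 1)‖ = (n : ℝ) + 1 := by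
      rw [show ((n : ℂ) + 1) = ((n + 1 : ℕ) : ℂ) by push_cast; ring, Complex.norm_natCast]
      push_cast; ring
    simp [norm_mul, norm_pow, h1, mul_assoc]
  have hsum2 : HasSum (fun q : ℕ => ((q : ℂ) + 1) * (bb l (q + 1) : ℂ) * z ^ (q + 1))
      (z * G') := by
    have h2 := hsum1.mul_left z
    rw [show (fun q : ℕ => z * (((q : ℂ) + 1) * (bb l (q + 1) : ℂ) * z ^ q))
        = fun q : ℕ => ((q : ℂ) + 1) * (bb l (q + 1) : ℂ) * z ^ (q + 1) from
      funext fun q => by ring] at h2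
    exact h2
  have hsum3 : HasSum (fun q : ℕ => (q : ℂ) * (bb l q : ℂ) * z ^ q) (z * G') := by
    have h2' : HasSum
        (fun q : ℕ => ((q + 1 : ℕ) : ℂ) * (bb l (q + 1) : ℂ) * z ^ (q + 1)) (z * G') := by
      rw [show (fun q : ℕ => ((q + 1 : ℕ) : ℂ) * (bb l (q + 1) : ℂ) * z ^ (q + 1))
          = fun q : ℕ => ((q : ℂ) + 1) * (bb l (q + 1) : ℂ) * z ^ (q + 1) from
        funext fun q => by push_cast; ring]
      exact hsum2
    have h3 := (hasSum_nat_add_iff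
      (f := fun n : ℕ => (n : ℂ) * (bb l n : ℂ) * z ^ n) 1).mp h2'
    simpa using h3
  have hsub := hsum1.sub hsum3
  rw [show (fun q : ℕ => ((q : ℂ) + 1) * (bb l (q + 1) : ℂ) * z ^ q
      - (q : ℂ) * (bb l q : ℂ) * z ^ q)
      = fun q : ℕ => (l : ℂ) * ((bb l q : ℂ) * z ^ q) from funext fun q => by
    have hr : ((q : ℝ) + 1) * bb l (q + 1) = (l + q) * bb l q := bb_rec l q
    have hrc : ((q : ℂ) + 1) * (bb l (q + 1) : ℂ) = ((l : ℂ) + q) * (bb l q : ℂ) := by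
      exact_mod_cast congrArg (Complex.ofReal) hr
    rw [hrc]; ring] at hsub
  have hl2 := hsum0.mul_left (l : ℂ)
  have := hl2.unique hsub
  rw [mul_comm] at this
  rw [sub_mul, one_mul, ← this]
  ring

lemma GG_zero (l : ℝ) : GG l 0 = 1 := by
  rw [GG, tsum_eq_single 0 (fun n hn => by simp [zero_pow hn])]
  simp [bb_zero]

lemma hasSum_binomial {l : ℝ} (hl : 0 < l) {z : ℂ} (hz : ‖z‖ < 1) :
    HasSum (fun n => (bb l n : ℂ) * z ^ n) ((1 - z) ^ (-(l : ℂ))) := by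
  have hGeq : GG l z = (1 - z) ^ (-(l : ℂ)) := by
    -- H y = (1-y)^l * GG l y is constant on the unit ball
    set H : ℂ → ℂ := fun y => (1 - y) ^ (l : ℂ) * GG l y with hHdef
    have hslit : ∀ y : ℂ, ‖y‖ < 1 → (1 - y) ∈ Complex.slitPlane := by
      intro y hy
      rw [Complex.mem_slitPlane_iff]
      left
      have : |y.re| ≤ ‖y‖ := Complex.abs_re_le_norm y
      have : y.re < 1 := lt_of_le_of_lt (le_trans (le_abs_self _) this) hy
      simp [Complex.sub_re]
      linarith
    have hne : ∀ y : ℂ, ‖y‖ < 1 → (1 - y) ≠ 0 := fun y hy =>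
      Complex.slitPlane_ne_zero (hslit y hy)
    have hH : ∀ y : ℂ, ‖y‖ < 1 → HasDerivAt H 0 y := by
      intro y hy
      have hbase : HasDerivAt (fun w : ℂ => 1 - w) (-1) y := by
        simpa using (hasDerivAt_id y).const_sub 1
      have hcpow : HasDerivAt (fun w : ℂ => (1 - w) ^ (l : ℂ))
          ((l : ℂ) * (1 - y) ^ ((l : ℂ) - 1) * (-1)) y :=
        HasDerivAt.cpow_const hbase (hslit y hy)
      have hG := GG_hasDerivAt hl hy
      have hmul := hcpow.mul hG
      refine hmul.congr_deriv ?_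
      have hsplit : (1 - y) ^ (l : ℂ) = (1 - y) ^ ((l : ℂ) - 1) * (1 - y) := by
        conv_lhs => rw [show (l : ℂ) = ((l : ℂ) - 1) + 1 by ring]
        rw [Complex.cpow_add _ _ (hne y hy), Complex.cpow_one]
      rw [hsplit]
      have hode := GG_ode hl hy
      linear_combination (-((1 : ℂ) - y) ^ ((l : ℂ) - 1)) * hode.symm
    have hconst : H z = H 0 := by
      apply (convex_ball (0 : ℂ) 1).is_const_of_fderivWithin_eq_zero (𝕜 := ℂ)
      · intro w hw
        rw [Metric.mem_ball, dist_zero_right] at hw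
        exact ((hH w hw).differentiableAt).differentiableWithinAt
      · intro w hw
        have hw' : ‖w‖ < 1 := by rwa [Metric.mem_ball, dist_zero_right] at hw
        rw [fderivWithin_of_isOpen Metric.isOpen_ball hw, ((hH w hw').hasFDerivAt).fderiv]
        ext v
        simp
      · rwa [Metric.mem_ball, dist_zero_right]
      · simp [Metric.mem_ball]
    have hH0 : H 0 = 1 := by
      rw [hHdef]
      simp [GG_zero, Complex.one_cpow]
    rw [hH0] at hconst
    -- H z = 1, i.e. (1-z)^l * GG l z = 1
    have hne' : (1 - z) ^ (l : ℂ) ≠ 0 := by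
      rw [Ne, Complex.cpow_eq_zero_iff]
      push_neg
      intro h
      exact absurd h (hne z hz)
    rw [Complex.cpow_neg]
    rw [hHdef] at hconst
    field_simp at hconst ⊢
    linear_combination hconst
  rw [← hGeq]
  exact (summable_bb_c hl hz).hasSum

lemma re_pos_aux {x c : ℝ} (hx : |x| < 1) (hc : |c| ≤ 1) : 0 < 1 - x * c := by
  have h1 : |x * c| ≤ |x| := by
    rw [abs_mul]
    calc |x| * |c| ≤ |x| * 1 := mul_le_mul_of_nonneg_left hc (abs_nonneg x)
      _ = |x| := mul_one _
  have h2 := le_abs_self (x * c)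
  linarith

lemma conj_w (θ : ℝ) :
    (starRingEnd ℂ) (Complex.exp ((θ : ℂ) * Complex.I))
      = Complex.exp (((-θ : ℝ) : ℂ) * Complex.I) := by
  rw [← Complex.exp_conj]
  congr 1
  rw [map_mul, Complex.conj_ofReal, Complex.conj_I]
  push_cast
  ring

lemma slit_aux (θ : ℝ) {x : ℝ} (hx : |x| < 1) :
    (1 - (x : ℂ) * Complex.exp ((θ : ℂ) * Complex.I)) ∈ Complex.slitPlane := by
  rw [Complex.mem_slitPlane_iff]
  left
  have hre : (1 - (x : ℂ) * Complex.exp ((θ : ℂ) * Complex.I)).re = 1 - x * Real.cos θ := by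
    simp [Complex.sub_re, Complex.mul_re, Complex.ofReal_re, Complex.ofReal_im,
      Complex.exp_ofReal_mul_I_re, Complex.exp_ofReal_mul_I_im]
  rw [hre]
  exact re_pos_aux hx (Real.abs_cos_le_one θ)

lemma cpow_prod_eq (l θ : ℝ) {x : ℝ} (hx : |x| < 1) :
    (1 - (x : ℂ) * Complex.exp ((θ : ℂ) * Complex.I)) ^ (-(l : ℂ)) *
      (1 - (x : ℂ) * (starRingEnd ℂ) (Complex.exp ((θ : ℂ) * Complex.I))) ^ (-(l : ℂ)) =
    (((1 + x ^ 2 - 2 * x * Real.cos θ) ^ (-l) : ℝ) : ℂ) := by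
  set w : ℂ := Complex.exp ((θ : ℂ) * Complex.I) with hw
  set a : ℂ := 1 - (x : ℂ) * w with ha
  have hare : a.re = 1 - x * Real.cos θ := by
    simp [ha, hw, Complex.sub_re, Complex.mul_re, Complex.ofReal_re, Complex.ofReal_im,
      Complex.exp_ofReal_mul_I_re, Complex.exp_ofReal_mul_I_im]
  have haim : a.im = -(x * Real.sin θ) := by
    simp [ha, hw, Complex.sub_im, Complex.mul_im, Complex.ofReal_re, Complex.ofReal_im,
      Complex.exp_ofReal_mul_I_re, Complex.exp_ofReal_mul_I_im]
  have hre : 0 < a.re := by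
    rw [hare]; exact re_pos_aux hx (Real.abs_cos_le_one θ)
  have harg : a.arg ≠ Real.pi := by
    intro h
    have h2 := (Complex.arg_eq_pi_iff.mp h).1
    linarith
  have hc : 1 - (x : ℂ) * (starRingEnd ℂ) w = (starRingEnd ℂ) a := by
    rw [ha]
    simp [map_sub, map_mul, Complex.conj_ofReal]
  rw [hc]
  have hexp : (-(l : ℂ)) = ((-l : ℝ) : ℂ) := by push_cast; ring
  rw [hexp, Complex.conj_cpow _ _ harg, Complex.conj_ofReal]
  rw [Complex.mul_conj]
  have habs : ‖a ^ ((-l : ℝ) : ℂ)‖ = ‖a‖ ^ (-l) :=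
    Complex.norm_cpow_real a (-l)
  rw [Complex.normSq_eq_norm_sq, habs]
  congr 1
  have h0 : (0 : ℝ) ≤ ‖a‖ := norm_nonneg a
  have hu : ‖a‖ ^ (2 : ℕ) = 1 + x ^ 2 - 2 * x * Real.cos θ := by
    rw [Complex.sq_norm, Complex.normSq_apply, hare, haim]
    have hsc := Real.sin_sq_add_cos_sq θ
    nlinarith [hsc]
  have e1 : (‖a‖ ^ (-l)) ^ (2 : ℕ) = ‖a‖ ^ (-l * 2) := by
    rw [← Real.rpow_natCast (‖a‖ ^ (-l)) 2, ← Real.rpow_mul h0]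
    norm_num
  have e2 : (‖a‖ ^ (2 : ℕ)) ^ (-l) = ‖a‖ ^ (2 * (-l)) := by
    rw [← Real.rpow_natCast ‖a‖ 2, ← Real.rpow_mul h0]
    norm_num
  calc (‖a‖ ^ (-l)) ^ (2 : ℕ) = ‖a‖ ^ (-l * 2) := e1
    _ = ‖a‖ ^ (2 * (-l)) := by rw [mul_comm]
    _ = (‖a‖ ^ (2 : ℕ)) ^ (-l) := e2.symm
    _ = (1 + x ^ 2 - 2 * x * Real.cos θ) ^ (-l) := by rw [hu]

lemma hasSum_term {l : ℝ} (hl : 0 < l) (θ : ℝ) {x : ℝ} (hx : |x| < 1) :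
    HasSum (fun q : ℕ => (∑ j ∈ Finset.range (q + 1),
        ((bb l j * bb l (q - j) : ℝ) : ℂ) *
          Complex.exp ((θ : ℂ) * Complex.I) ^ (2 * (j : ℤ) - q)) * (x : ℂ) ^ q)
      (((1 + x ^ 2 - 2 * x * Real.cos θ) ^ (-l) : ℝ) : ℂ) := by
  set w : ℂ := Complex.exp ((θ : ℂ) * Complex.I) with hw
  have hw0 : w ≠ 0 := Complex.exp_ne_zero _
  have hwn : ‖w‖ = 1 := by
    rw [hw, Complex.norm_exp_ofReal_mul_I]
  have hwcn : ‖(starRingEnd ℂ) w‖ = 1 := by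
    rw [RCLike.norm_conj, hwn]
  have hxw : ‖(x : ℂ) * w‖ < 1 := by
    rw [norm_mul, hwn, mul_one, Complex.norm_real, Real.norm_eq_abs]
    exact hx
  have hxwc : ‖(x : ℂ) * (starRingEnd ℂ) w‖ < 1 := by
    rw [norm_mul, hwcn, mul_one, Complex.norm_real, Real.norm_eq_abs]
    exact hx
  have hf : HasSum (fun j : ℕ => (bb l j : ℂ) * ((x : ℂ) * w) ^ j)
      ((1 - (x : ℂ) * w) ^ (-(l : ℂ))) := hasSum_binomial hl hxw
  have hg : HasSum (fun j : ℕ => (bb l j : ℂ) * ((x : ℂ) * (starRingEnd ℂ) w) ^ j)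
      ((1 - (x : ℂ) * (starRingEnd ℂ) w) ^ (-(l : ℂ))) := hasSum_binomial hl hxwc
  have hxwe : ‖(x : ℂ) * w‖ = |x| := by
    rw [norm_mul, hwn, mul_one, Complex.norm_real, Real.norm_eq_abs]
  have hxwce : ‖(x : ℂ) * (starRingEnd ℂ) w‖ = |x| := by
    rw [norm_mul, hwcn, mul_one, Complex.norm_real, Real.norm_eq_abs]
  have hnf : Summable (fun j : ℕ => ‖(bb l j : ℂ) * ((x : ℂ) * w) ^ j‖) := by
    refine ((norm_summable_bb hl) |x| (abs_nonneg x) hx).congr fun j => ?_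
    rw [norm_mul, norm_pow, hxwe]
  have hng : Summable (fun j : ℕ => ‖(bb l j : ℂ) * ((x : ℂ) * (starRingEnd ℂ) w) ^ j‖) := by
    refine ((norm_summable_bb hl) |x| (abs_nonneg x) hx).congr fun j => ?_
    rw [norm_mul, norm_pow, hxwce]
  have hsummand : Summable (fun q : ℕ => ∑ j ∈ Finset.range (q + 1),
      ((bb l j : ℂ) * ((x : ℂ) * w) ^ j) *
        ((bb l (q - j) : ℂ) * ((x : ℂ) * (starRingEnd ℂ) w) ^ (q - j))) :=
    (summable_norm_sum_mul_range_of_summable_norm hnf hng).of_norm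
  have hprod := hsummand.hasSum
  have htsum : (∑' q : ℕ, ∑ j ∈ Finset.range (q + 1),
      ((bb l j : ℂ) * ((x : ℂ) * w) ^ j) *
        ((bb l (q - j) : ℂ) * ((x : ℂ) * (starRingEnd ℂ) w) ^ (q - j)))
      = (1 - (x : ℂ) * w) ^ (-(l : ℂ)) *
          (1 - (x : ℂ) * (starRingEnd ℂ) w) ^ (-(l : ℂ)) := by
    rw [← hf.tsum_eq, ← hg.tsum_eq]
    exact (tsum_mul_tsum_eq_tsum_sum_range_of_summable_norm hnf hng).symm
  rw [htsum, cpow_prod_eq l θ hx] at hprod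
  have hcw : (starRingEnd ℂ) w = w⁻¹ := by
    rw [hw, ← Complex.exp_conj, ← Complex.exp_neg]
    congr 1
    rw [map_mul, Complex.conj_ofReal, Complex.conj_I]
    ring
  have hfe : (fun q : ℕ => ∑ j ∈ Finset.range (q + 1),
      ((bb l j : ℂ) * ((x : ℂ) * w) ^ j) *
        ((bb l (q - j) : ℂ) * ((x : ℂ) * (starRingEnd ℂ) w) ^ (q - j)))
      = fun q : ℕ => (∑ j ∈ Finset.range (q + 1),
        ((bb l j * bb l (q - j) : ℝ) : ℂ) * w ^ (2 * (j : ℤ) - q)) * (x : ℂ) ^ q := by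
    funext q
    rw [Finset.sum_mul]
    apply Finset.sum_congr rfl
    intro j hj
    have hjq : j ≤ q := Nat.lt_succ_iff.mp (Finset.mem_range.mp hj)
    have hxq : (x : ℂ) ^ j * (x : ℂ) ^ (q - j) = (x : ℂ) ^ q := by
      rw [← pow_add]
      congr 1
      omega
    have hpow : w ^ j * ((starRingEnd ℂ) w) ^ (q - j) = w ^ (2 * (j : ℤ) - q) := by
      rw [hcw, inv_pow, ← zpow_natCast w j, ← zpow_natCast w (q - j), ← zpow_neg,
        ← zpow_add₀ hw0]
      congr 1
      push_cast [Nat.cast_sub hjq]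
      ring
    calc ((bb l j : ℂ) * ((x : ℂ) * w) ^ j) *
          ((bb l (q - j) : ℂ) * ((x : ℂ) * (starRingEnd ℂ) w) ^ (q - j))
        = ((bb l j : ℂ) * (bb l (q - j) : ℂ)) * (((x : ℂ) ^ j * (x : ℂ) ^ (q - j)) *
            (w ^ j * ((starRingEnd ℂ) w) ^ (q - j))) := by
          rw [mul_pow, mul_pow]; ring
      _ = ((bb l j * bb l (q - j) : ℝ) : ℂ) * w ^ (2 * (j : ℤ) - q) * (x : ℂ) ^ q := by
          rw [hxq, hpow]
          push_cast
          ring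
  rw [hfe] at hprod
  exact hprod

lemma rootsum_re_nonneg (L : ℕ) (m : ℤ) :
    0 ≤ (∑ k ∈ Finset.range L,
      Complex.exp (((theta L k : ℝ) : ℂ) * Complex.I) ^ m).re := by
  set ζ : ℂ := Complex.exp (((2 * Real.pi * m / L : ℝ) : ℂ) * Complex.I) with hζ
  have hterm : ∀ k ∈ Finset.range L,
      Complex.exp (((theta L k : ℝ) : ℂ) * Complex.I) ^ m = ζ ^ k := by
    intro k _
    rw [← Complex.exp_int_mul, hζ, ← Complex.exp_nat_mul]
    congr 1
    simp only [theta]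
    push_cast
    by_cases hL : (L : ℂ) = 0
    · rw [hL]
      simp
    · field_simp
  rw [Finset.sum_congr rfl hterm]
  by_cases h1 : ζ = 1
  · rw [h1]
    simp
  · have hζL : ζ ^ L = 1 := by
      by_cases hL : L = 0
      · simp [hL]
      rw [hζ, ← Complex.exp_nat_mul]
      rw [show (L : ℂ) * (((2 * Real.pi * m / L : ℝ) : ℂ) * Complex.I)
          = (m : ℂ) * (2 * (Real.pi : ℂ) * Complex.I) from ?_]
      · exact Complex.exp_int_mul_two_pi_mul_I m
      have hL0 : (L : ℂ) ≠ 0 := Nat.cast_ne_zero.mpr hL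
      push_cast
      field_simp
    rw [geom_sum_eq h1, hζL]
    simp

noncomputable def coef (l : ℝ) (L q : ℕ) : ℝ :=
  ∑ j ∈ Finset.range (q + 1), bb l j * bb l (q - j) *
    (∑ k ∈ Finset.range L,
      Complex.exp (((theta L k : ℝ) : ℂ) * Complex.I) ^ (2 * (j : ℤ) - q)).re

lemma coef_nonneg {l : ℝ} (hl : 0 < l) (L q : ℕ) : 0 ≤ coef l L q := by
  apply Finset.sum_nonneg
  intro j _
  exact mul_nonneg (mul_nonneg (bb_pos hl j).le (bb_pos hl (q - j)).le)
    (rootsum_re_nonneg L _)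

lemma coef_two_pos {l : ℝ} (hl : 0 < l) {L : ℕ} (hL : 0 < L) : 0 < coef l L 2 := by
  apply Finset.sum_pos'
  · intro j _
    exact mul_nonneg (mul_nonneg (bb_pos hl j).le (bb_pos hl (2 - j)).le)
      (rootsum_re_nonneg L _)
  · refine ⟨1, by norm_num, ?_⟩
    have h0 : (2 * ((1 : ℕ) : ℤ) - ((2 : ℕ) : ℤ)) = 0 := by norm_num
    rw [h0]
    have : (∑ k ∈ Finset.range L,
        Complex.exp (((theta L k : ℝ) : ℂ) * Complex.I) ^ (0 : ℤ)).re = L := by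
      simp
    rw [this]
    have hb := bb_pos hl 1
    have hL' : (0 : ℝ) < L := Nat.cast_pos.mpr hL
    positivity

lemma hasSum_coef {l : ℝ} (hl : 0 < l) (L : ℕ) {x : ℝ} (hx : |x| < 1) :
    HasSum (fun q : ℕ => coef l L q * x ^ q)
      (∑ k ∈ Finset.range L, (1 + x ^ 2 - 2 * x * Real.cos (theta L k)) ^ (-l)) := by
  have hk : ∀ k ∈ Finset.range L,
      HasSum (fun q : ℕ => (∑ j ∈ Finset.range (q + 1),
          ((bb l j * bb l (q - j) : ℝ) : ℂ) *
            Complex.exp (((theta L k : ℝ) : ℂ) * Complex.I) ^ (2 * (j : ℤ) - q)) * (x : ℂ) ^ q)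
        (((1 + x ^ 2 - 2 * x * Real.cos (theta L k)) ^ (-l) : ℝ) : ℂ) :=
    fun k _ => hasSum_term hl (theta L k) hx
  have hsumC := hasSum_sum hk
  have hre := Complex.reCLM.hasSum hsumC
  have hterm : (fun q : ℕ => Complex.reCLM (∑ k ∈ Finset.range L,
      (∑ j ∈ Finset.range (q + 1), ((bb l j * bb l (q - j) : ℝ) : ℂ) *
        Complex.exp (((theta L k : ℝ) : ℂ) * Complex.I) ^ (2 * (j : ℤ) - q)) * (x : ℂ) ^ q))
      = fun q : ℕ => coef l L q * x ^ q := by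
    funext q
    rw [Complex.reCLM_apply, ← Finset.sum_mul, ← Complex.ofReal_pow, mul_comm,
      Complex.re_ofReal_mul]
    have hmain : (∑ k ∈ Finset.range L, ∑ j ∈ Finset.range (q + 1),
        ((bb l j * bb l (q - j) : ℝ) : ℂ) *
          Complex.exp (((theta L k : ℝ) : ℂ) * Complex.I) ^ (2 * (j : ℤ) - q)).re
        = coef l L q := by
      rw [Complex.re_sum]
      calc ∑ k ∈ Finset.range L, (∑ j ∈ Finset.range (q + 1),
            ((bb l j * bb l (q - j) : ℝ) : ℂ) *
              Complex.exp (((theta L k : ℝ) : ℂ) * Complex.I) ^ (2 * (j : ℤ) - q)).re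
          = ∑ k ∈ Finset.range L, ∑ j ∈ Finset.range (q + 1), bb l j * bb l (q - j) *
              (Complex.exp (((theta L k : ℝ) : ℂ) * Complex.I) ^ (2 * (j : ℤ) - q)).re := by
            refine Finset.sum_congr rfl fun k _ => ?_
            rw [Complex.re_sum]
            exact Finset.sum_congr rfl fun j _ => Complex.re_ofReal_mul _ _
        _ = ∑ j ∈ Finset.range (q + 1), ∑ k ∈ Finset.range L, bb l j * bb l (q - j) *
              (Complex.exp (((theta L k : ℝ) : ℂ) * Complex.I) ^ (2 * (j : ℤ) - q)).re :=
            Finset.sum_comm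
        _ = coef l L q := by
            refine Finset.sum_congr rfl fun j _ => ?_
            rw [← Finset.mul_sum, ← Complex.re_sum]
    rw [hmain]
    ring
  rw [hterm] at hre
  rw [show Complex.reCLM (∑ k ∈ Finset.range L,
      (((1 + x ^ 2 - 2 * x * Real.cos (theta L k)) ^ (-l) : ℝ) : ℂ))
      = ∑ k ∈ Finset.range L, (1 + x ^ 2 - 2 * x * Real.cos (theta L k)) ^ (-l) from by
    rw [Complex.reCLM_apply, Complex.re_sum]
    exact Finset.sum_congr rfl fun k _ => Complex.ofReal_re _] at hre
  exact hre

end PhiAux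


open PhiAux

/-- `φ_ν` is real-analytic on `(-1,1)` and is the sum on `(-1,1)` of a power series with
nonnegative coefficients; in particular for `ν = 1` its first and second derivatives are
strictly positive on `(0,1)`. -/
theorem phi_analytic_nonneg_coeffs (ℓ : ℕ) (hℓ : 2 ≤ ℓ) :
    (∀ ν : ℝ, 0 < ν →
      AnalyticOnNhd ℝ (phi ℓ ν) (Set.Ioo (-1 : ℝ) 1) ∧
      ∃ a : ℕ → ℝ, (∀ q, 0 ≤ a q) ∧
        ∀ x ∈ Set.Ioo (-1 : ℝ) 1, HasSum (fun q => a q * x ^ q) (phi ℓ ν x)) ∧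
    (∀ x ∈ Set.Ioo (0 : ℝ) 1,
      0 < deriv (phi ℓ 1) x ∧ 0 < deriv (deriv (phi ℓ 1)) x) := by
  have hL0 : 0 < ℓ := by omega
  have hmain : ∀ ν : ℝ, 0 < ν → ∀ x ∈ Set.Ioo (-1 : ℝ) 1,
      HasSum (fun q => coef (ν / 2) ℓ q * x ^ q) (phi ℓ ν x) := by
    intro ν hν x hx
    have hl : 0 < ν / 2 := by linarith
    have hax : |x| < 1 := abs_lt.mpr ⟨hx.1, hx.2⟩
    have h := hasSum_coef hl ℓ hax
    simpa only [phi] using h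
  constructor
  · intro ν hν
    have hl : 0 < ν / 2 := by linarith
    constructor
    · intro x hx
      have hax : |x| < 1 := abs_lt.mpr ⟨hx.1, hx.2⟩
      set F : ℂ → ℂ := fun z => ∑ k ∈ Finset.range ℓ,
        ((1 - z * Complex.exp (((theta ℓ k : ℝ) : ℂ) * Complex.I)) ^ (-((ν / 2 : ℝ) : ℂ)) *
          (1 - z * (starRingEnd ℂ)
            (Complex.exp (((theta ℓ k : ℝ) : ℂ) * Complex.I))) ^ (-((ν / 2 : ℝ) : ℂ))) with hF
    -- analyticity of F at x
      have hFa : AnalyticAt ℂ F (x : ℂ) := by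
        apply Finset.analyticAt_fun_sum
        intro k _
        have h1 : AnalyticAt ℂ
            (fun z : ℂ => 1 - z * Complex.exp (((theta ℓ k : ℝ) : ℂ) * Complex.I)) (x : ℂ) :=
          analyticAt_const.sub (analyticAt_id.mul analyticAt_const)
        have h2 : AnalyticAt ℂ (fun z : ℂ => 1 - z * (starRingEnd ℂ)
            (Complex.exp (((theta ℓ k : ℝ) : ℂ) * Complex.I))) (x : ℂ) :=
          analyticAt_const.sub (analyticAt_id.mul analyticAt_const)
        have hs1 : (1 - (x : ℂ) * Complex.exp (((theta ℓ k : ℝ) : ℂ) * Complex.I))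
            ∈ Complex.slitPlane := slit_aux _ hax
        have hs2 : (1 - (x : ℂ) * (starRingEnd ℂ)
            (Complex.exp (((theta ℓ k : ℝ) : ℂ) * Complex.I))) ∈ Complex.slitPlane := by
          rw [conj_w]
          exact slit_aux _ hax
        exact (h1.cpow analyticAt_const hs1).mul (h2.cpow analyticAt_const hs2)
      have hc1 : AnalyticAt ℝ (Complex.ofRealCLM : ℝ → ℂ) x := Complex.ofRealCLM.analyticAt x
      have hc2 : AnalyticAt ℝ F ((Complex.ofRealCLM : ℝ → ℂ) x) := hFa.restrictScalars
      have hc3 : AnalyticAt ℝ (fun y : ℝ => F ((y : ℝ) : ℂ)) x := hc2.comp hc1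
      have hc4 : AnalyticAt ℝ (Complex.reCLM : ℂ → ℝ) (F ((x : ℝ) : ℂ)) :=
        Complex.reCLM.analyticAt _
      have hreal : AnalyticAt ℝ (fun y : ℝ => (F ((y : ℝ) : ℂ)).re) x :=
        AnalyticAt.comp (g := (Complex.reCLM : ℂ → ℝ))
          (f := fun y : ℝ => F ((y : ℝ) : ℂ)) hc4 hc3
      apply hreal.congr
      filter_upwards [isOpen_Ioo.mem_nhds hx] with y hy
      have hay : |y| < 1 := abs_lt.mpr ⟨hy.1, hy.2⟩
      have hFy : F ((y : ℝ) : ℂ) = ((phi ℓ ν y : ℝ) : ℂ) := by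
        rw [hF]
        simp only [phi]
        rw [Complex.ofReal_sum]
        exact Finset.sum_congr rfl fun k _ => cpow_prod_eq (ν / 2) (theta ℓ k) hay
      rw [hFy, Complex.ofReal_re]
    · exact ⟨coef (ν / 2) ℓ, fun q => coef_nonneg hl ℓ q, hmain ν hν⟩
  · -- derivative part, ν = 1
    have hl : 0 < (1 : ℝ) / 2 := by norm_num
    have ha0 : ∀ q, 0 ≤ coef (1 / 2) ℓ q := fun q => coef_nonneg hl ℓ q
    have ha2 : 0 < coef (1 / 2) ℓ 2 := coef_two_pos hl hL0
    have haS : ∀ y ∈ Set.Ioo (-1 : ℝ) 1,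
        HasSum (fun q => coef (1 / 2) ℓ q * y ^ q) (phi ℓ 1 y) := by
      intro y hy
      have := hmain 1 one_pos y hy
      simpa using this
    set a : ℕ → ℝ := coef (1 / 2) ℓ with hadef
    have hnorm : ∀ s : ℝ, 0 ≤ s → s < 1 → Summable (fun q => ‖a q‖ * s ^ q) := by
      intro s h0 h1
      refine ((haS s ⟨by linarith, h1⟩).summable).congr fun q => ?_
      rw [Real.norm_of_nonneg (ha0 q)]
    set d : ℕ → ℝ := fun q => ((q : ℝ) + 1) * a (q + 1) with hddef
    have hd0 : ∀ q, 0 ≤ d q := fun q => mul_nonneg (by positivity) (ha0 _)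
    have hd1 : 0 < d 1 := by
      show 0 < (((1 : ℕ) : ℝ) + 1) * a (1 + 1)
      exact mul_pos (by norm_num) ha2
    have hnormd : ∀ s : ℝ, 0 ≤ s → s < 1 → Summable (fun q => ‖d q‖ * s ^ q) := by
      intro s h0 h1
      refine (summable_shift a hnorm h0 h1).congr fun q => ?_
      have e1 : ‖a (q + 1)‖ = a (q + 1) := Real.norm_of_nonneg (ha0 _)
      have e2 : ‖d q‖ = d q := Real.norm_of_nonneg (hd0 q)
      rw [e1, e2, hddef]
    have hderiv1 : ∀ y ∈ Set.Ioo (-1 : ℝ) 1,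
        HasDerivAt (phi ℓ 1) (∑' q, d q * y ^ q) y := by
      intro y hy
      have hay : ‖y‖ < 1 := by rw [Real.norm_eq_abs]; exact abs_lt.mpr ⟨hy.1, hy.2⟩
      have h1 := hasDerivAt_tsum_pow a hnorm hay
      have heq : (fun t : ℝ => ∑' q, a q * t ^ q) =ᶠ[nhds y] phi ℓ 1 := by
        filter_upwards [isOpen_Ioo.mem_nhds hy] with t ht
        exact (haS t ht).tsum_eq
      exact h1.congr_of_eventuallyEq heq.symm
    intro x hx
    obtain ⟨hx0, hx1⟩ := hx
    have hxI : x ∈ Set.Ioo (-1 : ℝ) 1 := ⟨by linarith, hx1⟩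
    have hxn : ‖x‖ < 1 := by rw [Real.norm_eq_abs, abs_of_pos hx0]; exact hx1
    constructor
    · rw [(hderiv1 x hxI).deriv]
      have hsum : Summable (fun q => d q * x ^ q) := by
        refine (hnormd x hx0.le hx1).congr fun q => ?_
        rw [Real.norm_of_nonneg (hd0 q)]
      have hle : d 1 * x ^ 1 ≤ ∑' q, d q * x ^ q :=
        Summable.le_tsum hsum 1 fun i _ => mul_nonneg (hd0 i) (pow_nonneg hx0.le i)
      have hpos : 0 < d 1 * x ^ 1 := mul_pos hd1 (by positivity)
      linarith
    · have hψeq : deriv (phi ℓ 1) =ᶠ[nhds x] fun y => ∑' q, d q * y ^ q := by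
        filter_upwards [isOpen_Ioo.mem_nhds hxI] with t ht
        exact (hderiv1 t ht).deriv
      rw [hψeq.deriv_eq]
      have h3 := hasDerivAt_tsum_pow d hnormd hxn
      rw [h3.deriv]
      have hsum2 : Summable (fun q : ℕ => ((q : ℝ) + 1) * d (q + 1) * x ^ q) := by
        refine (summable_shift d hnormd hx0.le hx1).congr fun q => ?_
        rw [Real.norm_of_nonneg (hd0 (q + 1))]
      have hle : (((0 : ℕ) : ℝ) + 1) * d (0 + 1) * x ^ 0 ≤ ∑' q : ℕ, ((q : ℝ) + 1) * d (q + 1) * x ^ q :=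
        Summable.le_tsum hsum2 0 fun i _ =>
          mul_nonneg (mul_nonneg (by positivity) (hd0 _)) (pow_nonneg hx0.le i)
      have hpos : 0 < (((0 : ℕ) : ℝ) + 1) * d (0 + 1) * x ^ 0 := by
        have : (0 : ℕ) + 1 = 1 := rfl
        rw [pow_zero, mul_one]
        exact mul_pos (by norm_num) hd1
      linarith
end

section
/- Let n ∈ {2,3,4}, ℓ ≥ 2, m_0 ≥ 0 and m_1,…,m_n > 0. Then there exists p ∈ R^n such that λ_1(p) < λ_2(p) < ⋯ < λ_n(p). -/
open Real BigOperators Finset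

lemma my_zeta_pos {ℓ : ℕ} (hℓ : 2 ≤ ℓ) : 0 < zeta ℓ := by
  have hπ := Real.pi_pos
  unfold zeta
  apply Finset.sum_pos'
  · intro k _
    positivity
  · refine ⟨1, Finset.mem_Ico.2 ⟨le_refl 1, hℓ⟩, ?_⟩
    have hθ : theta ℓ 1 = 2 * Real.pi / ℓ := by
      unfold theta; norm_num
    have hℓR : (2 : ℝ) ≤ (ℓ : ℝ) := by exact_mod_cast hℓ
    have h0 : 0 < 2 * Real.pi / ℓ := by positivity
    have h2 : 2 * Real.pi / ℓ < 2 * Real.pi := by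
      rw [div_lt_iff₀ (by linarith)]
      nlinarith
    have hcos : Real.cos (theta ℓ 1) < 1 := by
      rw [hθ]
      rcases lt_or_eq_of_le (Real.cos_le_one (2 * Real.pi / ℓ)) with h | h
      · exact h
      · exfalso
        have := (Real.cos_eq_one_iff_of_lt_of_lt (by linarith) h2).1 h
        linarith
    have : 0 < Real.sqrt (1 - Real.cos (theta ℓ 1)) :=
      Real.sqrt_pos.2 (by linarith)
    positivity

lemma my_rpow32 {d : ℝ} (hd : 0 ≤ d) : (d ^ 2) ^ ((3:ℝ)/2) = d ^ 3 := by
  rw [← Real.rpow_natCast d 2, ← Real.rpow_natCast d 3, ← Real.rpow_mul hd]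
  norm_num

lemma my_Dpow_bound {x y c : ℝ} (hx : 0 < x) (hxy : 2*x ≤ y) (hc2 : c ≤ 1) :
    y^3/8 ≤ (x^2 + y^2 - 2*x*y*c)^((3:ℝ)/2) := by
  have hy : 0 < y := by linarith
  have hd : 0 < y - x := by linarith
  have hD1 : (y-x)^2 ≤ x^2 + y^2 - 2*x*y*c := by nlinarith [mul_pos hx hy]
  have h1 : y^3/8 ≤ (y-x)^3 := by
    have h2 : y/2 ≤ y - x := by linarith
    calc y^3/8 = (y/2)^3 := by ring
    _ ≤ (y-x)^3 := pow_le_pow_left₀ (by positivity) h2 3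
  calc y^3/8 ≤ (y-x)^3 := h1
  _ = ((y-x)^2)^((3:ℝ)/2) := (my_rpow32 hd.le).symm
  _ ≤ (x^2 + y^2 - 2*x*y*c)^((3:ℝ)/2) :=
      Real.rpow_le_rpow (sq_nonneg _) hD1 (by norm_num)

lemma my_quot_bound {mj N Dp y : ℝ} (hm : 0 ≤ mj) (hy : 0 < y) (hN : |N| ≤ 2*y)
    (hD : y^3/8 ≤ Dp) : |mj * N / Dp| ≤ 16*mj/y^2 := by
  have hDp : 0 < Dp := lt_of_lt_of_le (by positivity) hD
  rw [abs_div, abs_mul, abs_of_nonneg hm, abs_of_pos hDp]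
  have h1 : mj * |N| ≤ mj * (2*y) := mul_le_mul_of_nonneg_left hN hm
  calc mj*|N|/Dp ≤ (mj*(2*y))/(y^3/8) :=
        div_le_div₀ (by positivity) h1 (by positivity) hD
  _ = 16*mj/y^2 := by field_simp; ring

/-- Bound for a term where the "self" radius `x` is the smaller one. -/
lemma my_term_bound_small {mj x y c : ℝ} (hmj : 0 ≤ mj) (hx : 0 < x) (hxy : 2*x ≤ y)
    (hc1 : -1 ≤ c) (hc2 : c ≤ 1) :
    |mj * (x - y*c) / (x^2 + y^2 - 2*x*y*c)^((3:ℝ)/2)| ≤ 16*mj/y^2 := by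
  have hy : 0 < y := by linarith
  have hN : |x - y*c| ≤ 2*y := by
    rw [abs_le]; constructor <;> nlinarith
  exact my_quot_bound hmj hy hN (my_Dpow_bound hx hxy hc2)

/-- Bound for a term where the "self" radius `y` is the larger one. -/
lemma my_term_bound_large {mj x y c : ℝ} (hmj : 0 ≤ mj) (hx : 0 < x) (hxy : 2*x ≤ y)
    (hc1 : -1 ≤ c) (hc2 : c ≤ 1) :
    |mj * (y - x*c) / (y^2 + x^2 - 2*y*x*c)^((3:ℝ)/2)| ≤ 16*mj/y^2 := by
  have hy : 0 < y := by linarith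
  have hN : |y - x*c| ≤ 2*y := by
    rw [abs_le]; constructor <;> nlinarith
  have hEq : y^2 + x^2 - 2*y*x*c = x^2 + y^2 - 2*x*y*c := by ring
  rw [hEq]
  exact my_quot_bound hmj hy hN (my_Dpow_bound hx hxy hc2)

lemma my_term_nonneg {mj x y c : ℝ} (hmj : 0 ≤ mj) (hx : 0 < x) (hxy : x < y)
    (hc2 : c ≤ 1) :
    0 ≤ mj * (y - x*c) / (y^2 + x^2 - 2*y*x*c)^((3:ℝ)/2) := by
  have hy : 0 < y := by linarith
  have hnum : 0 ≤ y - x*c := by nlinarith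
  have hD1 : 0 < y^2 + x^2 - 2*y*x*c := by nlinarith [mul_pos hx hy]
  have hDp : 0 < (y^2 + x^2 - 2*y*x*c)^((3:ℝ)/2) := Real.rpow_pos_of_pos hD1 _
  positivity

set_option maxHeartbeats 1000000 in
/-- For `n ∈ {2,3,4}` there is a point `p ∈ R^n` at which the multipliers are strictly
ordered: `λ_1(p) < λ_2(p) < ⋯ < λ_n(p)`. -/
theorem exists_ordered_multipliers (n ℓ : ℕ) (hn : n ∈ ({2, 3, 4} : Set ℕ)) (hℓ : 2 ≤ ℓ)
    (m0 : ℝ) (hm0 : 0 ≤ m0) (m : Fin n → ℝ) (hm : ∀ i, 0 < m i) :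
    ∃ p ∈ Rn n, StrictMono (lamCfg ℓ n m0 m p) := by
  have hn1 : 0 < n := by
    simp only [Set.mem_insert_iff, Set.mem_singleton_iff] at hn
    rcases hn with h | h | h <;> omega
  haveI : Nonempty (Fin n) := ⟨⟨0, hn1⟩⟩
  set Z := zeta ℓ with hZdef
  have hZ : 0 < Z := my_zeta_pos hℓ
  set L : ℝ := (ℓ : ℝ) with hLdef
  have hL : (2:ℝ) ≤ L := by rw [hLdef]; exact_mod_cast hℓ
  set M : ℝ := ∑ j, m j with hMdef
  have hM : 0 < M := Finset.sum_pos (fun j _ => hm j) Finset.univ_nonempty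
  have hmM : ∀ i, m i ≤ M := fun i =>
    Finset.single_le_sum (fun j _ => (hm j).le) (Finset.mem_univ i)
  set μ : ℝ := Finset.univ.inf' Finset.univ_nonempty m with hμdef
  have hμ : 0 < μ := (Finset.lt_inf'_iff _).2 (fun b _ => hm b)
  have hμle : ∀ i, μ ≤ m i := fun i => Finset.inf'_le m (Finset.mem_univ i)
  set B : ℝ := (2:ℝ) ^ ((3:ℝ)/2) with hBdef
  have hB1 : 1 ≤ B := Real.one_le_rpow (by norm_num) (by norm_num)
  have hB4 : B ≤ 4 := by
    have : B ≤ (2:ℝ) ^ ((2:ℝ)) :=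
      Real.rpow_le_rpow_of_exponent_le (by norm_num) (by norm_num)
    calc B ≤ (2:ℝ) ^ ((2:ℝ)) := this
    _ = 4 := by
      rw [show ((2:ℝ):ℝ) = ((2:ℕ):ℝ) by norm_num, Real.rpow_natCast]; norm_num
  set K : ℝ := μ * Z / 8 with hKdef
  have hK : 0 < K := by positivity
  set Cup : ℝ := m0 + M * Z + 16 * L * M with hCdef
  have hCup : 0 < Cup := by positivity
  set t : ℝ := max 2 (max (16*L*M/K) (Cup/K + 1)) with htdef
  have ht2 : (2:ℝ) ≤ t := le_max_left _ _
  have ht1 : (1:ℝ) ≤ t := by linarith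
  have ht0 : (0:ℝ) < t := by linarith
  have hta : 16*L*M/t^2 ≤ K := by
    have h1 : 16*L*M/K ≤ t := le_trans (le_max_left _ _) (le_max_right _ _)
    have h2 : 16*L*M ≤ K * t := by
      rw [div_le_iff₀ hK] at h1; linarith
    rw [div_le_iff₀ (by positivity)]
    nlinarith [mul_nonneg hK.le (mul_nonneg ht0.le (sub_nonneg.2 ht1))]
  have htb : Cup/t^3 < K := by
    have h1 : Cup/K + 1 ≤ t := le_trans (le_max_right _ _) (le_max_right _ _)
    have h2 : Cup < K * t := by
      rw [div_add' _ _ _ hK.ne', div_le_iff₀ hK] at h1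
      nlinarith
    rw [div_lt_iff₀ (by positivity)]
    nlinarith [mul_nonneg hK.le (mul_nonneg (mul_nonneg ht0.le ht0.le) (sub_nonneg.2 ht1))]
  -- the configuration
  set p : Fin n → ℝ := fun i => t ^ (i.val + 1) with hpdef
  have hppos : ∀ i, 0 < p i := fun i => pow_pos ht0 _
  have hpmono : ∀ {i j : Fin n}, i < j → t * p i ≤ p j := by
    intro i j hij
    have : (i.val + 1) + 1 ≤ j.val + 1 := by
      have := Fin.lt_iff_val_lt_val.mp hij; omega
    calc t * p i = t ^ (i.val + 1 + 1) := by rw [hpdef]; ring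
    _ ≤ t ^ (j.val + 1) := pow_le_pow_right₀ ht1 this
  have hpsm : StrictMono p := by
    intro i j hij
    have h := hpmono hij
    nlinarith [hppos i, hppos j]
  have hp2 : ∀ {i j : Fin n}, i < j → 2 * p i ≤ p j := by
    intro i j hij
    have h := hpmono hij
    nlinarith [hppos i]
  refine ⟨p, ⟨hppos, hpsm⟩, ?_⟩
  -- bounds on λ
  have hcos1 : ∀ k : ℕ, Real.cos (theta ℓ k) ≤ 1 := fun k => Real.cos_le_one _
  have hcosm1 : ∀ k : ℕ, -1 ≤ Real.cos (theta ℓ k) := fun k => Real.neg_one_le_cos _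
  -- per-index bounds on the interaction sum
  have hSsum : ∀ i : Fin n,
      (-(K / (p i)^2) ≤ ∑ j ∈ Finset.univ.erase i, ∑ k ∈ Finset.range ℓ,
        m j * (p i - p j * Real.cos (theta ℓ k)) /
          ((p i) ^ 2 + (p j) ^ 2 - 2 * p i * p j * Real.cos (theta ℓ k)) ^ ((3 : ℝ) / 2)) ∧
      ((∑ j ∈ Finset.univ.erase i, ∑ k ∈ Finset.range ℓ,
        m j * (p i - p j * Real.cos (theta ℓ k)) /
          ((p i) ^ 2 + (p j) ^ 2 - 2 * p i * p j * Real.cos (theta ℓ k)) ^ ((3 : ℝ) / 2))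
        ≤ 16*L*M / (p i)^2) := by
    intro i
    have hu : 0 < (p i)^2 := pow_pos (hppos i) 2
    -- termwise bounds
    have hterm : ∀ j ∈ Finset.univ.erase i, ∀ k ∈ Finset.range ℓ,
        -(16 * m j / (t * p i)^2) ≤
          m j * (p i - p j * Real.cos (theta ℓ k)) /
            ((p i) ^ 2 + (p j) ^ 2 - 2 * p i * p j * Real.cos (theta ℓ k)) ^ ((3 : ℝ) / 2) ∧
          m j * (p i - p j * Real.cos (theta ℓ k)) /
            ((p i) ^ 2 + (p j) ^ 2 - 2 * p i * p j * Real.cos (theta ℓ k)) ^ ((3 : ℝ) / 2)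
          ≤ 16 * m j / (p i)^2 := by
      intro j hj k _
      have hne : j ≠ i := Finset.ne_of_mem_erase hj
      set c := Real.cos (theta ℓ k)
      rcases lt_or_gt_of_ne hne with hji | hij
      · -- j < i : term is nonnegative, self radius p i is larger
        have h2 : 2 * p j ≤ p i := hp2 hji
        have hnn : 0 ≤ m j * (p i - p j * c) /
            ((p i)^2 + (p j)^2 - 2 * p i * p j * c) ^ ((3:ℝ)/2) :=
          my_term_nonneg (hm j).le (hppos j) (hpsm hji) (hcos1 k)
        have habs := my_term_bound_large (mj := m j) (x := p j) (y := p i) (c := c)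
          (hm j).le (hppos j) h2 (hcosm1 k) (hcos1 k)
        have hEq : (p i)^2 + (p j)^2 - 2 * p i * p j * c
            = (p i)^2 + (p j)^2 - 2 * (p i) * (p j) * c := by ring
        constructor
        · refine le_trans ?_ hnn
          have : 0 < 16 * m j / (t * p i)^2 :=
            div_pos (by linarith [hm j]) (pow_pos (mul_pos ht0 (hppos i)) 2)
          linarith
        · exact le_trans (le_abs_self _) habs
      · -- i < j : self radius p i is smaller; use 16 m_j / (p j)^2 ≤ 16 m_j/(t p_i)^2
        have h2 : 2 * p i ≤ p j := hp2 hij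
        have htp : t * p i ≤ p j := hpmono hij
        have habs := my_term_bound_small (mj := m j) (x := p i) (y := p j) (c := c)
          (hm j).le (hppos i) h2 (hcosm1 k) (hcos1 k)
        have hmono : 16 * m j / (p j)^2 ≤ 16 * m j / (t * p i)^2 := by
          apply div_le_div_of_nonneg_left (by linarith [hm j])
            (pow_pos (mul_pos ht0 (hppos i)) 2)
          have h0 : 0 < t * p i := mul_pos ht0 (hppos i)
          nlinarith
        have habs' : |m j * (p i - p j * c) /
            ((p i)^2 + (p j)^2 - 2 * p i * p j * c) ^ ((3:ℝ)/2)| ≤ 16 * m j / (t * p i)^2 :=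
          le_trans habs hmono
        have hmono2 : 16 * m j / (t * p i)^2 ≤ 16 * m j / (p i)^2 := by
          apply div_le_div_of_nonneg_left (by linarith [hm j]) (pow_pos (hppos i) 2)
          have h5 : 0 ≤ (p i)^2 * (t^2 - 1) :=
            mul_nonneg (sq_nonneg _) (by nlinarith)
          nlinarith
        rw [abs_le] at habs'
        exact ⟨habs'.1, le_trans habs'.2 hmono2⟩
    have hMsub : ∑ j ∈ Finset.univ.erase i, m j ≤ M :=
      Finset.sum_le_sum_of_subset_of_nonneg (Finset.erase_subset _ _)
        (fun j _ _ => (hm j).le)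
    have hMsubnn : 0 ≤ ∑ j ∈ Finset.univ.erase i, m j :=
      Finset.sum_nonneg (fun j _ => (hm j).le)
    constructor
    · -- lower bound
      have h1 : ∑ j ∈ Finset.univ.erase i, ∑ k ∈ Finset.range ℓ,
          (-(16 * m j / (t * p i)^2)) ≤ _ :=
        Finset.sum_le_sum (fun j hj => Finset.sum_le_sum (fun k hk => (hterm j hj k hk).1))
      refine le_trans ?_ h1
      have h2 : ∑ j ∈ Finset.univ.erase i, ∑ k ∈ Finset.range ℓ,
          (-(16 * m j / (t * p i)^2))
          = -(16 * L / (t * p i)^2 * ∑ j ∈ Finset.univ.erase i, m j) := by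
        simp only [Finset.sum_const, Finset.card_range, nsmul_eq_mul, hLdef]
        rw [Finset.mul_sum, ← Finset.sum_neg_distrib]
        apply Finset.sum_congr rfl
        intro j _; push_cast; ring
      rw [h2, neg_le_neg_iff]
      have h3 : 16 * L / (t * p i)^2 * ∑ j ∈ Finset.univ.erase i, m j
          ≤ 16 * L / (t * p i)^2 * M :=
        mul_le_mul_of_nonneg_left hMsub (by positivity)
      refine le_trans h3 ?_
      have h4 : 16 * L / (t * p i)^2 * M = (16 * L * M / t^2) / (p i)^2 := by
        field_simp
      rw [h4, div_le_div_iff₀ (by positivity) hu]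
      nlinarith [hta, hu]
    · -- upper bound
      have h1 : (∑ j ∈ Finset.univ.erase i, ∑ k ∈ Finset.range ℓ,
          m j * (p i - p j * Real.cos (theta ℓ k)) /
            ((p i) ^ 2 + (p j) ^ 2 - 2 * p i * p j * Real.cos (theta ℓ k)) ^ ((3 : ℝ) / 2))
          ≤ ∑ j ∈ Finset.univ.erase i, ∑ k ∈ Finset.range ℓ, (16 * m j / (p i)^2) :=
        Finset.sum_le_sum (fun j hj => Finset.sum_le_sum (fun k hk => (hterm j hj k hk).2))
      refine le_trans h1 ?_
      have h2 : ∑ j ∈ Finset.univ.erase i, ∑ k ∈ Finset.range ℓ, (16 * m j / (p i)^2)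
          = 16 * L / (p i)^2 * ∑ j ∈ Finset.univ.erase i, m j := by
        simp only [Finset.sum_const, Finset.card_range, nsmul_eq_mul, hLdef]
        rw [Finset.mul_sum]
        apply Finset.sum_congr rfl
        intro j _; push_cast; ring
      rw [h2]
      calc 16 * L / (p i)^2 * ∑ j ∈ Finset.univ.erase i, m j
          ≤ 16 * L / (p i)^2 * M := mul_le_mul_of_nonneg_left hMsub (by positivity)
      _ = 16 * L * M / (p i)^2 := by ring
  -- bounds on lamCfg
  have hlam_le : ∀ i : Fin n, lamCfg ℓ n m0 m p i ≤ -(K / (p i)^3) := by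
    intro i
    have hu : 0 < (p i)^2 := pow_pos (hppos i) 2
    have hS := (hSsum i).1
    have hBpos : (0:ℝ) < B := lt_of_lt_of_le zero_lt_one hB1
    have h2 : 2*(K/(p i)^2) ≤ m i * Z / (B * (p i)^2) := by
      have hstep : (μ * Z) / (4 * (p i)^2) ≤ (m i * Z) / (B * (p i)^2) := by
        apply div_le_div₀ (mul_nonneg (hm i).le hZ.le)
          (mul_le_mul_of_nonneg_right (hμle i) hZ.le) (mul_pos hBpos hu)
        nlinarith
      have heq : 2*(K/(p i)^2) = (μ * Z) / (4 * (p i)^2) := by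
        rw [hKdef]; ring
      rw [heq]; exact hstep
    have hinner : -(m0 / (p i) ^ 2) - m i * Z / (B * (p i) ^ 2)
        - (∑ j ∈ Finset.univ.erase i, ∑ k ∈ Finset.range ℓ,
          m j * (p i - p j * Real.cos (theta ℓ k)) /
            ((p i) ^ 2 + (p j) ^ 2 - 2 * p i * p j * Real.cos (theta ℓ k)) ^ ((3 : ℝ) / 2))
        ≤ -(K / (p i)^2) := by
      have hm0' : 0 ≤ m0 / (p i)^2 := div_nonneg hm0 hu.le
      linarith
    have hunfold : lamCfg ℓ n m0 m p i = (1 / p i) * (-(m0 / (p i) ^ 2)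
        - m i * Z / (B * (p i) ^ 2)
        - ∑ j ∈ Finset.univ.erase i, ∑ k ∈ Finset.range ℓ,
          m j * (p i - p j * Real.cos (theta ℓ k)) /
            ((p i) ^ 2 + (p j) ^ 2 - 2 * p i * p j * Real.cos (theta ℓ k)) ^ ((3 : ℝ) / 2)) := rfl
    rw [hunfold]
    calc (1 / p i) * (-(m0 / (p i) ^ 2) - m i * Z / (B * (p i) ^ 2)
        - ∑ j ∈ Finset.univ.erase i, ∑ k ∈ Finset.range ℓ,
          m j * (p i - p j * Real.cos (theta ℓ k)) /
            ((p i) ^ 2 + (p j) ^ 2 - 2 * p i * p j * Real.cos (theta ℓ k)) ^ ((3 : ℝ) / 2))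
        ≤ (1 / p i) * (-(K / (p i)^2)) :=
          mul_le_mul_of_nonneg_left hinner (one_div_nonneg.2 (hppos i).le)
    _ = -(K / (p i)^3) := by rw [mul_neg, div_mul_div_comm, one_mul, ← pow_succ']
  have hlam_ge : ∀ i : Fin n, -(Cup / (p i)^3) ≤ lamCfg ℓ n m0 m p i := by
    intro i
    have hu : 0 < (p i)^2 := pow_pos (hppos i) 2
    have hS := (hSsum i).2
    have hBpos : (0:ℝ) < B := lt_of_lt_of_le zero_lt_one hB1
    have h2 : m i * Z / (B * (p i)^2) ≤ M * Z / (p i)^2 := by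
      apply div_le_div₀ (mul_nonneg hM.le hZ.le)
        (mul_le_mul_of_nonneg_right (hmM i) hZ.le) hu
      nlinarith
    have hinner : -(Cup / (p i)^2) ≤ -(m0 / (p i) ^ 2) - m i * Z / (B * (p i) ^ 2)
        - (∑ j ∈ Finset.univ.erase i, ∑ k ∈ Finset.range ℓ,
          m j * (p i - p j * Real.cos (theta ℓ k)) /
            ((p i) ^ 2 + (p j) ^ 2 - 2 * p i * p j * Real.cos (theta ℓ k)) ^ ((3 : ℝ) / 2)) := by
      have hsplit : Cup / (p i)^2 = m0/(p i)^2 + M*Z/(p i)^2 + 16*L*M/(p i)^2 := by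
        rw [hCdef]; ring
      linarith
    have hunfold : lamCfg ℓ n m0 m p i = (1 / p i) * (-(m0 / (p i) ^ 2)
        - m i * Z / (B * (p i) ^ 2)
        - ∑ j ∈ Finset.univ.erase i, ∑ k ∈ Finset.range ℓ,
          m j * (p i - p j * Real.cos (theta ℓ k)) /
            ((p i) ^ 2 + (p j) ^ 2 - 2 * p i * p j * Real.cos (theta ℓ k)) ^ ((3 : ℝ) / 2)) := rfl
    rw [hunfold]
    calc -(Cup / (p i)^3) = (1 / p i) * (-(Cup / (p i)^2)) := by
          rw [mul_neg, div_mul_div_comm, one_mul, ← pow_succ']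
    _ ≤ _ := mul_le_mul_of_nonneg_left hinner (one_div_nonneg.2 (hppos i).le)
  -- conclude
  intro i j hij
  have h1 := hlam_le i
  have h2 := hlam_ge j
  have h3 : Cup / (p j)^3 < K / (p i)^3 := by
    have htp : t * p i ≤ p j := hpmono hij
    have hpi3 : 0 < (p i)^3 := pow_pos (hppos i) 3
    have hpj3 : 0 < (p j)^3 := pow_pos (hppos j) 3
    have h4 : Cup / (p j)^3 ≤ Cup / (t^3 * (p i)^3) := by
      apply div_le_div_of_nonneg_left hCup.le (by positivity)
      calc t^3 * (p i)^3 = (t * p i)^3 := by ring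
      _ ≤ (p j)^3 := pow_le_pow_left₀ (by positivity) htp 3
    refine lt_of_le_of_lt h4 ?_
    have h5 : Cup / (t^3 * (p i)^3) = (Cup / t^3) / (p i)^3 := by
      field_simp
    rw [h5, div_lt_div_iff₀ (by positivity) hpi3]
    nlinarith [htb, hpi3]
  linarith
end

section
/- Let U ⊆ ℝ^n be open, let f : U → ℝ^n be continuously differentiable on U, let x̄ ∈ U, let A : ℝ^n → ℝ^n be a linear map, and let ρ* > 0 be such that the closed ball B̄_{ρ*}(x̄) is contained in U. Suppose Y₀, Z₀ ∈ ℝ and Z₂ : (0,ρ*] → [0,∞) satisfy: ‖A f(x̄)‖ ≤ Y₀; ‖Id − A ∘ Df(x̄)‖ ≤ Z₀; and ‖A ∘ (Df(c) − Df(x̄))‖ ≤ Z₂(ρ)·ρ for every ρ ∈ (0,ρ*] and every c ∈ B̄_ρ(x̄). If there exists ρ₀ ∈ (0,ρ*] such that Z₂(ρ₀)ρ₀² − (1 − Z₀)ρ₀ + Y₀ < 0, then A is invertible and there exists a unique x̃ ∈ B̄_{ρ₀}(x̄) with f(x̃) = 0. -/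
open Real BigOperators Finset

/-- The radii polynomial theorem (local finite-dimensional version): if the radii
polynomial `p(ρ) = Z₂(ρ)ρ² − (1 − Z₀)ρ + Y₀` is negative at some `ρ₀ ∈ (0, ρ*]`, then `A`
is invertible and `f` has a unique zero in the closed ball of radius `ρ₀` about `x̄`. -/
theorem radii_polynomial (n : ℕ) (U : Set (Fin n → ℝ)) (hU : IsOpen U)
    (f : (Fin n → ℝ) → (Fin n → ℝ)) (hf : ContDiffOn ℝ 1 f U)
    (xb : Fin n → ℝ) (hxb : xb ∈ U)
    (A : (Fin n → ℝ) →L[ℝ] (Fin n → ℝ))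
    (ρs : ℝ) (hρs : 0 < ρs) (hball : Metric.closedBall xb ρs ⊆ U)
    (Y0 Z0 : ℝ) (Z2 : ℝ → ℝ) (hZ2nonneg : ∀ ρ ∈ Set.Ioc (0 : ℝ) ρs, 0 ≤ Z2 ρ)
    (hY0 : ‖A (f xb)‖ ≤ Y0)
    (hZ0 : ‖ContinuousLinearMap.id ℝ (Fin n → ℝ) - A.comp (fderiv ℝ f xb)‖ ≤ Z0)
    (hZ2 : ∀ ρ ∈ Set.Ioc (0 : ℝ) ρs, ∀ c ∈ Metric.closedBall xb ρ,
      ‖A.comp (fderiv ℝ f c - fderiv ℝ f xb)‖ ≤ Z2 ρ * ρ)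
    (ρ0 : ℝ) (hρ0 : ρ0 ∈ Set.Ioc (0 : ℝ) ρs)
    (hneg : Z2 ρ0 * ρ0 ^ 2 - (1 - Z0) * ρ0 + Y0 < 0) :
    Function.Bijective A ∧
    ∃! x : Fin n → ℝ, x ∈ Metric.closedBall xb ρ0 ∧ f x = 0 := by
  obtain ⟨hρ0pos, hρ0le⟩ := hρ0
  have hY0nn : 0 ≤ Y0 := le_trans (norm_nonneg _) hY0
  have hZ0nn : 0 ≤ Z0 := le_trans (norm_nonneg _) hZ0
  have hZ2nn : 0 ≤ Z2 ρ0 := hZ2nonneg ρ0 ⟨hρ0pos, hρ0le⟩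
  set κ : ℝ := Z0 + Z2 ρ0 * ρ0 with hκdef
  have hκ0 : 0 ≤ κ := by nlinarith
  have hκρ : κ * ρ0 + Y0 < ρ0 := by nlinarith
  have hκ1 : κ < 1 := by nlinarith
  have hZ0lt1 : Z0 < 1 := by nlinarith
  set D := fderiv ℝ f xb with hD
  -- A is bijective
  have hunit : ‖ContinuousLinearMap.id ℝ (Fin n → ℝ) - A.comp D‖ < 1 :=
    lt_of_le_of_lt hZ0 hZ0lt1
  have hid : (ContinuousLinearMap.id ℝ (Fin n → ℝ)) =
      (1 : (Fin n → ℝ) →L[ℝ] (Fin n → ℝ)) := rfl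
  set u := Units.oneSub (ContinuousLinearMap.id ℝ (Fin n → ℝ) - A.comp D)
      (by rwa [hid] at hunit) with hu
  have huval : (u : (Fin n → ℝ) →L[ℝ] (Fin n → ℝ)) = A.comp D := by
    show (1 : (Fin n → ℝ) →L[ℝ] (Fin n → ℝ)) -
      (ContinuousLinearMap.id ℝ (Fin n → ℝ) - A.comp D) = A.comp D
    rw [hid]; abel
  have hAsurj : Function.Surjective A := by
    intro y
    refine ⟨D ((↑u⁻¹ : (Fin n → ℝ) →L[ℝ] (Fin n → ℝ)) y), ?_⟩
    have := congrArg (fun (M : (Fin n → ℝ) →L[ℝ] (Fin n → ℝ)) => M y) u.mul_inv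
    simpa [huval] using this
  have hAbij : Function.Bijective A := by
    refine ⟨?_, hAsurj⟩
    have : Function.Surjective (A : (Fin n → ℝ) →ₗ[ℝ] (Fin n → ℝ)) := hAsurj
    exact (LinearMap.injective_iff_surjective).2 this
  refine ⟨hAbij, ?_⟩
  -- the Newton-like operator
  set T : (Fin n → ℝ) → (Fin n → ℝ) := fun x => x - A (f x) with hT
  set s := Metric.closedBall xb ρ0 with hs
  have hsub : s ⊆ U := fun x hx => hball (Metric.closedBall_subset_closedBall hρ0le hx)
  have hdiff : ∀ x ∈ s, HasFDerivAt f (fderiv ℝ f x) x := by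
    intro x hx
    exact ((hf.differentiableOn one_ne_zero).differentiableAt
      (hU.mem_nhds (hsub hx))).hasFDerivAt
  have hT' : ∀ x ∈ s, HasFDerivAt T
      (ContinuousLinearMap.id ℝ (Fin n → ℝ) - A.comp (fderiv ℝ f x)) x := by
    intro x hx
    exact (hasFDerivAt_id x).sub (A.hasFDerivAt.comp x (hdiff x hx))
  have hbound : ∀ x ∈ s,
      ‖ContinuousLinearMap.id ℝ (Fin n → ℝ) - A.comp (fderiv ℝ f x)‖ ≤ κ := by
    intro x hx
    have hsplit : ContinuousLinearMap.id ℝ (Fin n → ℝ) - A.comp (fderiv ℝ f x) =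
        (ContinuousLinearMap.id ℝ (Fin n → ℝ) - A.comp D) -
        A.comp (fderiv ℝ f x - D) := by
      rw [ContinuousLinearMap.comp_sub]; abel
    rw [hsplit]
    calc ‖(ContinuousLinearMap.id ℝ (Fin n → ℝ) - A.comp D) -
        A.comp (fderiv ℝ f x - D)‖
        ≤ ‖ContinuousLinearMap.id ℝ (Fin n → ℝ) - A.comp D‖ +
          ‖A.comp (fderiv ℝ f x - D)‖ := norm_sub_le _ _
      _ ≤ Z0 + Z2 ρ0 * ρ0 := add_le_add hZ0 (hZ2 ρ0 ⟨hρ0pos, hρ0le⟩ x hx)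
  have hconv : Convex ℝ s := convex_closedBall xb ρ0
  have hlip : ∀ x ∈ s, ∀ y ∈ s, ‖T y - T x‖ ≤ κ * ‖y - x‖ := by
    intro x hx y hy
    exact hconv.norm_image_sub_le_of_norm_hasFDerivWithin_le
      (fun z hz => (hT' z hz).hasFDerivWithinAt) hbound hx hy
  have hxbs : xb ∈ s := Metric.mem_closedBall_self (le_of_lt hρ0pos)
  have hTxb : ‖T xb - xb‖ ≤ Y0 := by
    have : T xb - xb = -(A (f xb)) := by simp [hT]
    rw [this, norm_neg]; exact hY0
  have hmaps : Set.MapsTo T s s := by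
    intro x hx
    have hx' : ‖x - xb‖ ≤ ρ0 := by rwa [← dist_eq_norm, ← Metric.mem_closedBall]
    have : ‖T x - xb‖ ≤ ρ0 := by
      calc ‖T x - xb‖ = ‖(T x - T xb) + (T xb - xb)‖ := by ring_nf
        _ ≤ ‖T x - T xb‖ + ‖T xb - xb‖ := norm_add_le _ _
        _ ≤ κ * ‖x - xb‖ + Y0 := add_le_add (hlip xb hxbs x hx) hTxb
        _ ≤ κ * ρ0 + Y0 := by nlinarith
        _ ≤ ρ0 := le_of_lt hκρ
    rwa [Metric.mem_closedBall, dist_eq_norm]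
  -- contraction on the ball
  set K : NNReal := ⟨κ, hκ0⟩ with hK
  have hlipOn : LipschitzOnWith K T s := by
    apply LipschitzOnWith.of_dist_le_mul
    intro x hx y hy
    rw [dist_eq_norm, dist_eq_norm]
    exact hlip y hy x hx
  have hcontr : ContractingWith K (hmaps.restrict T s s) := by
    constructor
    · exact_mod_cast hκ1
    · intro x y
      simpa [Subtype.edist_eq] using
        (hlipOn x.2 y.2 : edist (T x.1) (T y.1) ≤ K * edist x.1 y.1)
  have hcomplete : IsComplete s := Metric.isClosed_closedBall.isComplete
  obtain ⟨y, hys, hfy, -⟩ := hcontr.exists_fixedPoint' hcomplete hmaps hxbs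
    (edist_ne_top _ _)
  -- fixed points of T are zeros of f
  have hfix_iff : ∀ x, T x = x ↔ f x = 0 := by
    intro x
    constructor
    · intro h
      have hAfx : A (f x) = 0 := by
        have : x - A (f x) = x := h
        have := sub_eq_self.mp this
        exact this
      have : A (f x) = A 0 := by rw [hAfx, map_zero]
      exact hAbij.1 this
    · intro h
      simp [hT, h]
  refine ⟨y, ⟨hys, (hfix_iff y).1 hfy⟩, ?_⟩
  rintro z ⟨hzs, hfz⟩
  have hTz : T z = z := (hfix_iff z).2 hfz
  have hd : ‖z - y‖ ≤ κ * ‖z - y‖ := by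
    calc ‖z - y‖ = ‖T z - T y‖ := by rw [hTz, hfy]
      _ ≤ κ * ‖z - y‖ := hlip y hys z hzs
  have : ‖z - y‖ = 0 := by nlinarith [norm_nonneg (z - y)]
  have := sub_eq_zero.mp (norm_eq_zero.mp this)
  exact this
end

section
/- Let U ⊆ ℝ^n be open, let f : U → ℝ^n be twice continuously differentiable on U, let x̄ ∈ U, let A be an n×n real matrix with entries A_{ij} acting on ℝ^n, and let ρ* > 0 be such that the closed ball B̄_{ρ*}(x̄) is contained in U. Suppose Z₂ ≥ 0 satisfies Z₂ ≥ max_{1≤i≤n} Σ_{k,m=1}^{n} | Σ_{j=1}^{n} A_{ij} · (∂²f_j/∂x_k∂x_m)(b) | for every b ∈ B̄_{ρ*}(x̄). Then for every ρ ∈ (0,ρ*] and every c ∈ B̄_ρ(x̄) one has ‖A ∘ (Df(c) − Df(x̄))‖ ≤ Z₂·ρ. -/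
open Real BigOperators Finset

/-- Estimate of the `Z₂` bound of the radii polynomial approach from the second-order
partial derivatives: if `Z₂` dominates
`max_i Σ_{k,m} |Σ_j A_{ij} ∂²f_j/∂x_k∂x_m (b)|` on the ball of radius `ρ*`, then
`‖A ∘ (Df(c) − Df(x̄))‖ ≤ Z₂·ρ` for every `ρ ∈ (0,ρ*]` and `c ∈ B̄_ρ(x̄)`. -/
theorem Z2_bound_from_second_derivatives (n : ℕ) (U : Set (Fin n → ℝ)) (hU : IsOpen U)
    (f : (Fin n → ℝ) → (Fin n → ℝ)) (hf : ContDiffOn ℝ 2 f U)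
    (xb : Fin n → ℝ) (A : Matrix (Fin n) (Fin n) ℝ)
    (ρs : ℝ) (hρs : 0 < ρs) (hball : Metric.closedBall xb ρs ⊆ U)
    (Z2 : ℝ) (hZ2nonneg : 0 ≤ Z2)
    (hZ2 : ∀ b ∈ Metric.closedBall xb ρs, ∀ i : Fin n,
      ∑ k : Fin n, ∑ l : Fin n,
        |∑ j : Fin n, A i j *
          fderiv ℝ (fun x => fderiv ℝ f x (Pi.single l 1) j) b (Pi.single k 1)| ≤ Z2) :
    ∀ ρ ∈ Set.Ioc (0 : ℝ) ρs, ∀ c ∈ Metric.closedBall xb ρ,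
      ‖(LinearMap.toContinuousLinearMap (Matrix.toLin' A)).comp
        (fderiv ℝ f c - fderiv ℝ f xb)‖ ≤ Z2 * ρ := by
  intro ρ hρ c hc
  set L : (Fin n → ℝ) →L[ℝ] (Fin n → ℝ) :=
    LinearMap.toContinuousLinearMap (Matrix.toLin' A) with hL
  -- differentiability of fderiv f on U
  have hdf : ∀ b ∈ U, HasFDerivAt (fderiv ℝ f) (fderiv ℝ (fderiv ℝ f) b) b := by
    intro b hb
    have h1 : ContDiffAt ℝ 2 f b := hf.contDiffAt (hU.mem_nhds hb)
    have h2 : ContDiffAt ℝ 1 (fderiv ℝ f) b := h1.fderiv_right (by norm_num)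
    exact (h2.differentiableAt (by norm_num)).hasFDerivAt
  -- identification of second partial derivatives
  have hsecond : ∀ b ∈ Metric.closedBall xb ρs, ∀ k l j : Fin n,
      fderiv ℝ (fun x => fderiv ℝ f x (Pi.single l 1) j) b (Pi.single k 1)
        = fderiv ℝ (fderiv ℝ f) b (Pi.single k 1) (Pi.single l 1) j := by
    intro b hb k l j
    set φ : ((Fin n → ℝ) →L[ℝ] (Fin n → ℝ)) →L[ℝ] ℝ :=
      (ContinuousLinearMap.proj j).comp
        (ContinuousLinearMap.apply ℝ (Fin n → ℝ) (Pi.single l 1)) with hφ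
    have hcomp : HasFDerivAt (fun x => φ (fderiv ℝ f x))
        (φ.comp (fderiv ℝ (fderiv ℝ f) b)) b :=
      φ.hasFDerivAt.comp b (hdf b (hball hb))
    have : fderiv ℝ (fun x => fderiv ℝ f x (Pi.single l 1) j) b
        = φ.comp (fderiv ℝ (fderiv ℝ f) b) := by
      have := hcomp.fderiv
      simpa [hφ, Function.comp] using this
    rw [this]
    simp [hφ]
  -- bound on the derivative of x ↦ L ∘ Df(x)
  have hbound : ∀ b ∈ Metric.closedBall xb ρs,
      ‖((ContinuousLinearMap.compL ℝ (Fin n → ℝ) (Fin n → ℝ) (Fin n → ℝ) L).comp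
        (fderiv ℝ (fderiv ℝ f) b))‖ ≤ Z2 := by
    intro b hb
    set B := fderiv ℝ (fderiv ℝ f) b with hB
    apply ContinuousLinearMap.opNorm_le_bound _ hZ2nonneg
    intro v
    have h1 : ((ContinuousLinearMap.compL ℝ (Fin n → ℝ) (Fin n → ℝ) (Fin n → ℝ) L).comp B) v
        = L.comp (B v) := rfl
    rw [h1]
    apply ContinuousLinearMap.opNorm_le_bound _ (by positivity)
    intro w
    rw [mul_comm Z2 ‖v‖]
    have hexp : B v w = ∑ k, ∑ l, (v k * w l) • B (Pi.single k 1) (Pi.single l 1) := by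
      have hv : v = ∑ k, v k • (Pi.single k 1 : Fin n → ℝ) := by ext j; simp [Pi.single_apply]
      have hw : w = ∑ l, w l • (Pi.single l 1 : Fin n → ℝ) := by ext j; simp [Pi.single_apply]
      conv_lhs => rw [hv, hw]
      simp only [map_sum, map_smul, ContinuousLinearMap.coe_sum', Finset.sum_apply,
        ContinuousLinearMap.coe_smul', Pi.smul_apply, Finset.smul_sum, smul_smul]
      rw [Finset.sum_comm]
      simp_rw [mul_comm (w _) (v _)]
    rw [pi_norm_le_iff_of_nonneg (by positivity)]
    intro i
    have hLi : ∀ u : Fin n → ℝ, L u i = ∑ j, A i j * u j := by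
      intro u
      simp [hL, Matrix.toLin'_apply, Matrix.mulVec, dotProduct]
    calc ‖(L.comp (B v)) w i‖
        = |∑ k, ∑ l, (v k * w l) * (∑ j, A i j * B (Pi.single k 1) (Pi.single l 1) j)| := by
          rw [Real.norm_eq_abs]
          congr 1
          rw [ContinuousLinearMap.comp_apply, hLi, hexp]
          simp only [map_sum, Finset.sum_apply, Finset.mul_sum]
          rw [Finset.sum_comm]
          congr 1; ext k
          rw [Finset.sum_comm]
          congr 1; ext l
          refine Finset.sum_congr rfl fun j _ => ?_
          simp only [Pi.smul_apply, smul_eq_mul]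
          ring
      _ ≤ ∑ k, ∑ l, |v k * w l| * |∑ j, A i j * B (Pi.single k 1) (Pi.single l 1) j| := by
          refine (Finset.abs_sum_le_sum_abs _ _).trans ?_
          refine Finset.sum_le_sum fun k _ => ?_
          refine (Finset.abs_sum_le_sum_abs _ _).trans ?_
          refine Finset.sum_le_sum fun l _ => ?_
          rw [abs_mul]
      _ ≤ ∑ k, ∑ l, (‖v‖ * ‖w‖) * |∑ j, A i j * B (Pi.single k 1) (Pi.single l 1) j| := by
          refine Finset.sum_le_sum fun k _ => Finset.sum_le_sum fun l _ => ?_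
          refine mul_le_mul_of_nonneg_right ?_ (abs_nonneg _)
          rw [abs_mul]
          refine mul_le_mul ?_ ?_ (abs_nonneg _) (norm_nonneg _)
          · exact (norm_le_pi_norm v k)
          · exact (norm_le_pi_norm w l)
      _ = (‖v‖ * ‖w‖) * ∑ k, ∑ l, |∑ j, A i j * B (Pi.single k 1) (Pi.single l 1) j| := by
          simp [Finset.mul_sum]
      _ ≤ (‖v‖ * ‖w‖) * Z2 := by
          refine mul_le_mul_of_nonneg_left ?_ (by positivity)
          have := hZ2 b hb i
          calc ∑ k, ∑ l, |∑ j, A i j * B (Pi.single k 1) (Pi.single l 1) j|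
              = ∑ k : Fin n, ∑ l : Fin n, |∑ j : Fin n, A i j *
                fderiv ℝ (fun x => fderiv ℝ f x (Pi.single l 1) j) b (Pi.single k 1)| := by
                refine Finset.sum_congr rfl fun k _ => Finset.sum_congr rfl fun l _ => ?_
                congr 1
                refine Finset.sum_congr rfl fun j _ => ?_
                rw [hsecond b hb k l j]
            _ ≤ Z2 := this
      _ = ‖v‖ * Z2 * ‖w‖ := by ring
  -- mean value inequality on the ball of radius ρ
  have hsub : Metric.closedBall xb ρ ⊆ Metric.closedBall xb ρs :=
    Metric.closedBall_subset_closedBall hρ.2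
  have hxb : xb ∈ Metric.closedBall xb ρ := Metric.mem_closedBall_self (le_of_lt hρ.1)
  have hmvt := (convex_closedBall xb ρ).norm_image_sub_le_of_norm_hasFDerivWithin_le
    (f := fun x => L.comp (fderiv ℝ f x))
    (f' := fun x => (ContinuousLinearMap.compL ℝ (Fin n → ℝ) (Fin n → ℝ) (Fin n → ℝ) L).comp
      (fderiv ℝ (fderiv ℝ f) x))
    (fun x hx => by
      have hx' : x ∈ U := hball (hsub hx)
      have : HasFDerivAt (fun y => L.comp (fderiv ℝ f y))
          ((ContinuousLinearMap.compL ℝ (Fin n → ℝ) (Fin n → ℝ) (Fin n → ℝ) L).comp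
            (fderiv ℝ (fderiv ℝ f) x)) x := by
        exact ((ContinuousLinearMap.compL ℝ (Fin n → ℝ) (Fin n → ℝ) (Fin n → ℝ) L).hasFDerivAt).comp
          x (hdf x hx')
      exact this.hasFDerivWithinAt)
    (fun x hx => hbound x (hsub hx)) hxb hc
  have heq : L.comp (fderiv ℝ f c - fderiv ℝ f xb)
      = L.comp (fderiv ℝ f c) - L.comp (fderiv ℝ f xb) := ContinuousLinearMap.comp_sub _ _ _
  rw [heq]
  refine hmvt.trans ?_
  have : ‖c - xb‖ ≤ ρ := by
    rw [← dist_eq_norm]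
    exact Metric.mem_closedBall.mp hc
  exact mul_le_mul_of_nonneg_left this hZ2nonneg
end
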